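/- arXiv:1304.6277 — 6 statements merged into one kernel-verified Lean document; each statement's English description precedes it below -/
import Mathlib

section
/- Let l > 0, ε > 0, x* ∈ ℝ with |x*| < l − 3ε, p* ∈ ℝ, ħ > 0, and let ψ_β be the truncated-Gaussian state with normalization constant B_β > 0. Then, as β → 0⁺, B_β = 1 + O(e^{−(l−|x*|−3ε)²/(2β²)}). -/
/-!
Up to the factor `B_β²`, `|ψ_β|²` is the density of `N(x*, β²)` times `η_ε²`, and `0 ≤ η_ε ≤ 1`
with `η_ε = 1` on the interval of radius `δ = l - |x*| - 3ε` around `x*`. So the normalization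
integral `J_β = B_β⁻²` lies between `1` and the Gaussian mass of that interval, i.e.
`1 - J_β` is at most the Gaussian tail beyond `δ`, which is `≤ (β/δ) e^{-δ²/(2β²)}`.
Finally `B_β - 1 ≤ B_β² - 1 = B_β² (1 - J_β)` and `B_β² ≤ 2` once `J_β ≥ 1/2`.
-/

open Real MeasureTheory Filter Asymptotics Topology
open Set ProbabilityTheory
open scoped NNReal

theorem integral_Ioi_exp_neg_sq_div_le {v a : ℝ} (hv : 0 < v) (ha : 0 < a) (c : ℝ) :
    ∫ x in Ioi (c + a), exp (-(x - c) ^ 2 / (2 * v)) ≤ v / a * exp (-a ^ 2 / (2 * v)) := by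
  set K := exp (-a ^ 2 / (2 * v) + a * (c + a) / v)
  -- Completing the square: the Gaussian lies below its exponential tangent at `c + a`.
  have hdom : ∀ x, exp (-(x - c) ^ 2 / (2 * v)) ≤ K * exp (-(a / v) * x) := by
    intro x
    rw [← exp_add, exp_le_exp, ← sub_nonneg]
    have : -a ^ 2 / (2 * v) + a * (c + a) / v + -(a / v) * x - -(x - c) ^ 2 / (2 * v)
        = (x - c - a) ^ 2 / (2 * v) := by field_simp; ring
    rw [this]; positivity
  have hneg : -(a / v) < 0 := neg_neg_of_pos (div_pos ha hv)
  calc ∫ x in Ioi (c + a), exp (-(x - c) ^ 2 / (2 * v))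
      ≤ ∫ x in Ioi (c + a), K * exp (-(a / v) * x) :=
        integral_mono_of_nonneg (ae_of_all _ fun _ => (exp_pos _).le)
          ((integrableOn_exp_mul_Ioi hneg _).const_mul K) (ae_of_all _ hdom)
    _ = v / a * exp (-a ^ 2 / (2 * v)) := by
        rw [integral_const_mul, integral_exp_mul_Ioi hneg, ← mul_div_assoc, mul_neg, ← exp_add]
        field_simp
        ring_nf

theorem gaussianPDFReal_neg (μ : ℝ) (v : ℝ≥0) (x : ℝ) :
    gaussianPDFReal μ v (-x) = gaussianPDFReal (-μ) v x := by
  simp only [gaussianPDFReal, sub_neg_eq_add]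
  ring_nf

theorem integral_Ioi_gaussianPDFReal_le (μ : ℝ) {v : ℝ≥0} (hv : v ≠ 0) {a : ℝ} (ha : 0 < a) :
    ∫ x in Ioi (μ + a), gaussianPDFReal μ v x ≤
      (√(2 * π * v))⁻¹ * (v / a * exp (-a ^ 2 / (2 * v))) := by
  simp only [gaussianPDFReal]
  rw [integral_const_mul]
  exact mul_le_mul_of_nonneg_left
    (integral_Ioi_exp_neg_sq_div_le (NNReal.coe_pos.2 (pos_iff_ne_zero.2 hv)) ha μ) (by positivity)

theorem integral_Iio_gaussianPDFReal_le (μ : ℝ) {v : ℝ≥0} (hv : v ≠ 0) {a : ℝ} (ha : 0 < a) :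
    ∫ x in Iio (μ - a), gaussianPDFReal μ v x ≤
      (√(2 * π * v))⁻¹ * (v / a * exp (-a ^ 2 / (2 * v))) := by
  rw [setIntegral_congr_set Iio_ae_eq_Iic, show μ - a = -(-μ + a) by ring,
    ← integral_comp_neg_Ioi]
  simpa only [gaussianPDFReal_neg] using integral_Ioi_gaussianPDFReal_le (-μ) hv ha

theorem integral_compl_Icc_gaussianPDFReal_le (μ : ℝ) {v : ℝ≥0} (hv : v ≠ 0) {a : ℝ}
    (ha : 0 < a) :
    ∫ x in (Icc (μ - a) (μ + a))ᶜ, gaussianPDFReal μ v x ≤ √v / a * exp (-a ^ 2 / (2 * v)) := by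
  have hg {s : Set ℝ} : IntegrableOn (gaussianPDFReal μ v) s :=
    (integrable_gaussianPDFReal μ v).integrableOn
  have hcompl : (Icc (μ - a) (μ + a))ᶜ = Iio (μ - a) ∪ Ioi (μ + a) := by
    ext x; simp only [mem_compl_iff, mem_Icc, mem_union, mem_Iio, mem_Ioi, not_and_or, not_le]
  rw [hcompl, setIntegral_union (Set.disjoint_left.2 fun x hx hx' => by
      simp only [mem_Iio, mem_Ioi] at hx hx'; linarith) measurableSet_Ioi hg hg]
  refine (add_le_add (integral_Iio_gaussianPDFReal_le μ hv ha)
    (integral_Ioi_gaussianPDFReal_le μ hv ha)).trans ?_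
  have h2π : 2 ≤ √(2 * π) := Real.le_sqrt_of_sq_le (by nlinarith [pi_gt_three])
  have hs : 0 < √(v : ℝ) := Real.sqrt_pos.2 (NNReal.coe_pos.2 (pos_iff_ne_zero.2 hv))
  have hE := (exp_pos (-a ^ 2 / (2 * v))).le
  rw [Real.sqrt_mul (by positivity)]
  generalize exp (-a ^ 2 / (2 * v)) = E at hE ⊢
  have hv' := Real.sq_sqrt v.coe_nonneg
  generalize √(v : ℝ) = s at hv' hs ⊢
  rw [← hv']
  field_simp
  nlinarith

section Mollifier

variable {ω : ℝ → ℝ}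

theorem setIntegral_comp_sub_le_one (hω0 : ∀ x, 0 ≤ ω x) (hω1 : ∫ x, ω x = 1) (s : Set ℝ)
    (x : ℝ) : ∫ y in s, ω (x - y) ≤ 1 := by
  have hint : Integrable ω := Integrable.of_integral_ne_zero (by rw [hω1]; exact one_ne_zero)
  calc ∫ y in s, ω (x - y) ≤ ∫ y, ω (x - y) :=
        setIntegral_le_integral (hint.comp_sub_left x) (ae_of_all _ fun _ => hω0 _)
    _ = 1 := by rw [integral_sub_left_eq_self ω volume x, hω1]

theorem setIntegral_Icc_comp_sub_eq_one {ε : ℝ} (hωsupp : ∀ x, ε ≤ |x| → ω x = 0)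
    (hω1 : ∫ x, ω x = 1) {a b x : ℝ} (hx : x ∈ Icc (a + ε) (b - ε)) :
    ∫ y in Icc a b, ω (x - y) = 1 := by
  rw [setIntegral_eq_integral_of_forall_compl_eq_zero fun y hy => hωsupp _ ?_,
    integral_sub_left_eq_self ω volume x, hω1]
  rw [mem_Icc, not_and_or, not_le, not_le] at hy
  rcases hy with hy | hy
  · exact (le_abs_self _).trans' (by linarith [hx.1])
  · exact (neg_le_abs _).trans' (by linarith [hx.2])

end Mollifier

theorem abs_sub_one_le_of_sq_mul_eq_one {B J t : ℝ} (hB : 0 < B) (hBJ : B ^ 2 * J = 1)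
    (hJ : J ≤ 1) (htJ : 1 - t ≤ J) (ht : t ≤ 1 / 2) : |B - 1| ≤ 2 * t := by
  have hB1 : 1 ≤ B := by nlinarith
  have hB2 : B ^ 2 ≤ 2 := by nlinarith
  rw [abs_of_nonneg (by linarith)]
  calc B - 1 ≤ B ^ 2 - 1 := by nlinarith
    _ = B ^ 2 * (1 - J) := by linear_combination hBJ
    _ ≤ 2 * t := by nlinarith

theorem setIntegral_mul_le_integral {g h : ℝ → ℝ} (hg0 : ∀ x, 0 ≤ g x) (hg : Integrable g)
    (hh0 : ∀ x, 0 ≤ h x) (hh1 : ∀ x, h x ≤ 1) (s : Set ℝ) :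
    ∫ x in s, g x * h x ≤ ∫ x, g x :=
  calc ∫ x in s, g x * h x ≤ ∫ x in s, g x :=
        integral_mono_of_nonneg (ae_of_all _ fun x => mul_nonneg (hg0 x) (hh0 x)) hg.integrableOn
          (ae_of_all _ fun x => mul_le_of_le_one_right (hg0 x) (hh1 x))
    _ ≤ ∫ x, g x := setIntegral_le_integral hg (ae_of_all _ hg0)

theorem setIntegral_le_setIntegral_mul {g h : ℝ → ℝ} {s t : Set ℝ} (hg0 : ∀ x, 0 ≤ g x)
    (hh0 : ∀ x, 0 ≤ h x) (hgh : IntegrableOn (fun x => g x * h x) s) (ht : MeasurableSet t)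
    (hts : t ⊆ s) (hh1 : ∀ x ∈ t, h x = 1) :
    ∫ x in t, g x ≤ ∫ x in s, g x * h x :=
  calc ∫ x in t, g x = ∫ x in t, g x * h x :=
        setIntegral_congr_fun ht fun x hx => by rw [hh1 x hx, mul_one]
    _ ≤ ∫ x in s, g x * h x :=
        setIntegral_mono_set hgh (ae_of_all _ fun x => mul_nonneg (hg0 x) (hh0 x))
          hts.eventuallyLE

theorem norm_gaussianWavePacket_sq (B β xs ps hbar h x : ℝ) :
    ‖(B : ℂ) * (((2 * π * β ^ 2) ^ (-(1/4 : ℝ)) : ℝ) : ℂ) *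
        Complex.exp (-(((x - xs) ^ 2 / (4 * β ^ 2) : ℝ) : ℂ) +
          Complex.I * (x : ℂ) * (ps : ℂ) / (hbar : ℂ)) * (h : ℂ)‖ ^ 2 =
      B ^ 2 * (gaussianPDFReal xs (‖β‖₊ ^ 2) x * h ^ 2) := by
  have hre : (-(((x - xs) ^ 2 / (4 * β ^ 2) : ℝ) : ℂ) +
      Complex.I * (x : ℂ) * (ps : ℂ) / (hbar : ℂ)).re = -((x - xs) ^ 2 / (4 * β ^ 2)) := by
    rw [show Complex.I * (x : ℂ) * (ps : ℂ) / (hbar : ℂ) = ((x * ps / hbar : ℝ) : ℂ) * Complex.I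
      by push_cast; ring]
    rw [Complex.add_re, Complex.neg_re, Complex.ofReal_re, Complex.re_ofReal_mul, Complex.I_re,
      mul_zero, add_zero]
  have hpos : 0 ≤ 2 * π * β ^ 2 := by positivity
  have hrpow : ((2 * π * β ^ 2) ^ (-(1/4 : ℝ))) ^ 2 = (√(2 * π * β ^ 2))⁻¹ := by
    rw [Real.sqrt_eq_rpow, ← Real.rpow_neg hpos, ← Real.rpow_natCast, ← Real.rpow_mul hpos]
    norm_num
  have hexp : exp (-((x - xs) ^ 2 / (4 * β ^ 2))) ^ 2 = exp (-(x - xs) ^ 2 / (2 * β ^ 2)) := by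
    rw [← exp_nat_mul]; congr 1; field_simp; ring
  rw [gaussianPDFReal, NNReal.coe_pow, coe_nnnorm, Real.norm_eq_abs, sq_abs]
  simp only [norm_mul, Complex.norm_real, Complex.norm_exp, hre, Real.norm_eq_abs, mul_pow,
    sq_abs, abs_of_nonneg (rpow_nonneg hpos _), hrpow, hexp]
  ring

theorem one_sub_le_integral_Icc_gaussianPDFReal (μ : ℝ) {v : ℝ≥0} (hv : v ≠ 0) {a : ℝ}
    (ha : 0 < a) :
    1 - √v / a * exp (-a ^ 2 / (2 * v)) ≤ ∫ x in Icc (μ - a) (μ + a), gaussianPDFReal μ v x := by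
  have h := integral_add_compl (measurableSet_Icc (a := μ - a) (b := μ + a))
    (integrable_gaussianPDFReal μ v)
  rw [integral_gaussianPDFReal_eq_one μ hv] at h
  linarith [integral_compl_Icc_gaussianPDFReal_le μ hv ha]

theorem abs_sub_one_le_of_sq_mul_integral_gaussianPDFReal_eq_one {μ a β B : ℝ} {η : ℝ → ℝ}
    {s : Set ℝ} (hβ : 0 < β) (hβa : β ≤ a / 2) (hη0 : ∀ x, 0 ≤ η x) (hη1 : ∀ x, η x ≤ 1)
    (hs : Icc (μ - a) (μ + a) ⊆ s) (hη : ∀ x ∈ Icc (μ - a) (μ + a), η x = 1) (hB : 0 < B)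
    (hBJ : B ^ 2 * ∫ x in s, gaussianPDFReal μ (‖β‖₊ ^ 2) x * η x ^ 2 = 1) :
    |B - 1| ≤ exp (-a ^ 2 / (2 * β ^ 2)) := by
  have ha : 0 < a := by linarith
  have hv : ‖β‖₊ ^ 2 ≠ 0 := pow_ne_zero _ (nnnorm_ne_zero_iff.2 hβ.ne')
  have hv' : ((‖β‖₊ ^ 2 : ℝ≥0) : ℝ) = β ^ 2 := by
    rw [NNReal.coe_pow, coe_nnnorm, Real.norm_eq_abs, sq_abs]
  have hcore := one_sub_le_integral_Icc_gaussianPDFReal μ hv ha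
  rw [hv', Real.sqrt_sq hβ.le] at hcore
  have hE1 : exp (-a ^ 2 / (2 * β ^ 2)) ≤ 1 := exp_le_one_iff.2 (by
    have : 0 ≤ a ^ 2 / (2 * β ^ 2) := by positivity
    rw [neg_div]; linarith)
  have hβa_half : β / a ≤ 1 / 2 := by rw [div_le_iff₀ ha]; linarith
  have hg0 := gaussianPDFReal_nonneg μ (‖β‖₊ ^ 2)
  have hη2 : ∀ x, 0 ≤ η x ^ 2 := fun x => sq_nonneg _
  -- The Bochner integral of a non-integrable function is `0`, so `B² J = 1` gives integrability.
  have hbound := abs_sub_one_le_of_sq_mul_eq_one hB hBJ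
    ((setIntegral_mul_le_integral hg0 (integrable_gaussianPDFReal _ _) hη2
      (fun x => pow_le_one₀ (hη0 x) (hη1 x)) s).trans_eq (integral_gaussianPDFReal_eq_one μ hv))
    (hcore.trans (setIntegral_le_setIntegral_mul hg0 hη2
      (Integrable.of_integral_ne_zero (right_ne_zero_of_mul_eq_one hBJ)) measurableSet_Icc hs
      fun x hx => by rw [hη x hx, one_pow]))
    ((mul_le_of_le_one_right (by positivity) hE1).trans hβa_half)
  calc |B - 1| ≤ 2 * (β / a) * exp (-a ^ 2 / (2 * β ^ 2)) := by rwa [mul_assoc]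
    _ ≤ exp (-a ^ 2 / (2 * β ^ 2)) := mul_le_of_le_one_left (exp_pos _).le (by linarith)

theorem truncated_gaussian_normalization_general
    (l ε xs ps hbar : ℝ) (hε : 0 < ε)
    (hxs : |xs| < l - 3 * ε)
    (C : ℝ) (hC : 0 < C) (ω : ℝ → ℝ)
    (hω : ω = fun x => if |x| < ε then C * Real.exp (-ε / (ε - |x|)) else 0)
    (hωint : ∫ x : ℝ, ω x = 1)
    (η : ℝ → ℝ)
    (hη : η = fun x => ∫ y in Set.Icc (-l + 2 * ε) (l - 2 * ε), ω (x - y))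
    (B : ℝ → ℝ) (hB : ∀ β : ℝ, 0 < β → 0 < B β)
    (ψ : ℝ → ℝ → ℂ)
    (hψ : ∀ β : ℝ, 0 < β → ψ β = fun x : ℝ =>
      (B β : ℂ) * (((2 * π * β ^ 2) ^ (-(1/4 : ℝ)) : ℝ) : ℂ) *
        Complex.exp (-(((x - xs) ^ 2 / (4 * β ^ 2) : ℝ) : ℂ) +
          Complex.I * (x : ℂ) * (ps : ℂ) / (hbar : ℂ)) * ((η x : ℝ) : ℂ))
    (hnorm : ∀ β : ℝ, 0 < β → ∫ x in Set.Icc (-l) l, ‖ψ β x‖ ^ 2 = 1) :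
    (fun β : ℝ => B β - 1) =O[𝓝[>] (0:ℝ)]
      (fun β : ℝ => Real.exp (-(l - |xs| - 3 * ε) ^ 2 / (2 * β ^ 2))) := by
  set δ := l - |xs| - 3 * ε
  have hδ : 0 < δ := by linarith [abs_nonneg xs]
  have hω0 : ∀ x, 0 ≤ ω x := fun x => by
    rw [hω]; dsimp only; split_ifs <;> positivity
  have hωsupp : ∀ x, ε ≤ |x| → ω x = 0 := fun x hx => by
    rw [hω]; exact if_neg (not_lt.2 hx)
  have hcore : Icc (xs - δ) (xs + δ) ⊆ Icc (-l + 2 * ε + ε) (l - 2 * ε - ε) := by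
    intro x hx; constructor <;> linarith [hx.1, hx.2, le_abs_self xs, neg_abs_le xs]
  subst hη
  refine isBigO_iff.2 ⟨1, ?_⟩
  filter_upwards [Ioc_mem_nhdsGT (half_pos hδ)] with β ⟨hβ, hβδ⟩
  rw [one_mul, norm_of_nonneg (exp_pos _).le]
  refine abs_sub_one_le_of_sq_mul_integral_gaussianPDFReal_eq_one (s := Icc (-l) l) hβ hβδ
    (fun _ => integral_nonneg fun _ => hω0 _) (setIntegral_comp_sub_le_one hω0 hωint _)
    (hcore.trans (Icc_subset_Icc (by linarith) (by linarith)))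
    (fun x hx => setIntegral_Icc_comp_sub_eq_one hωsupp hωint (hcore hx))
    (hB β hβ) ?_
  rw [← integral_const_mul, ← hnorm β hβ, hψ β hβ]
  simp only [norm_gaussianWavePacket_sq]

/-- Normalization constant of the truncated-Gaussian state:
`B_β = 1 + O(exp(-(l-|x*|-3ε)²/(2β²)))` as `β → 0⁺`. -/
theorem truncated_gaussian_normalization
    (l ε xs ps hbar : ℝ) (hl : 0 < l) (hε : 0 < ε)
    (hxs : |xs| < l - 3 * ε) (hhbar : 0 < hbar)
    (C : ℝ) (hC : 0 < C) (ω : ℝ → ℝ)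
    (hω : ω = fun x => if |x| < ε then C * Real.exp (-ε / (ε - |x|)) else 0)
    (hωint : ∫ x : ℝ, ω x = 1)
    (η : ℝ → ℝ)
    (hη : η = fun x => ∫ y in Set.Icc (-l + 2 * ε) (l - 2 * ε), ω (x - y))
    (B : ℝ → ℝ) (hB : ∀ β : ℝ, 0 < β → 0 < B β)
    (ψ : ℝ → ℝ → ℂ)
    (hψ : ∀ β : ℝ, 0 < β → ψ β = fun x : ℝ =>
      (B β : ℂ) * (((2 * π * β ^ 2) ^ (-(1/4 : ℝ)) : ℝ) : ℂ) *
        Complex.exp (-(((x - xs) ^ 2 / (4 * β ^ 2) : ℝ) : ℂ) +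
          Complex.I * (x : ℂ) * (ps : ℂ) / (hbar : ℂ)) * ((η x : ℝ) : ℂ))
    (hnorm : ∀ β : ℝ, 0 < β → ∫ x in Set.Icc (-l) l, ‖ψ β x‖ ^ 2 = 1) :
    (fun β : ℝ => B β - 1) =O[𝓝[>] (0:ℝ)]
      (fun β : ℝ => Real.exp (-(l - |xs| - 3 * ε) ^ 2 / (2 * β ^ 2))) :=
  truncated_gaussian_normalization_general l ε xs ps hbar hε hxs C hC ω hω hωint η hη B hB ψ hψ
    hnorm
end

section
/- Let l > 0, ε > 0, x* ∈ ℝ with |x*| < l − 3ε, p* ∈ ℝ, ħ > 0, and let ψ_β be the truncated-Gaussian state. Then the mean momentum satisfies p̄_β = p* exactly for every β > 0, and the mean position satisfies x̄_β = x* + O(β·e^{−(l−|x*|−3ε)²/(2β²)}) as β → 0⁺. -/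
/-!
Write `ψ_β = G · e^{ikx}` with `k = p*/ħ` and `G = N e^{-(x-x*)²/(4β²)} η` real, `C¹`, and
vanishing at `±l` (the cut-off `η` does). Then `conj ψ · (-iħ) ψ' = -iħ G G' + ħk G²`, and
`∫ G G' = [G²/2] = 0`, so the mean momentum is `ħk ∫ G² = p*`.

For the position, `η ≡ 1` on `[x* - d, x* + d]` with `d = l - |x*| - 3ε`; there the first moment
of the Gaussian about `x*` cancels by symmetry, and each tail contributes at most
`N²β² e^{-d²/(2β²)}`. Normalisation, restricted to `[x* - β, x* + β]`, forces
`N² · 2β e^{-1/2} ≤ 1`, whence `|x̄_β - x*| ≤ e^{1/2} β e^{-d²/(2β²)}`.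
-/

open Real MeasureTheory Filter Asymptotics Topology Set

/-- The convolution `χ_{[-a,a]} ∗ ω`. -/
noncomputable def mollifiedIndicator (ω : ℝ → ℝ) (a x : ℝ) : ℝ :=
  ∫ t in (x - a)..(x + a), ω t

section MollifiedIndicator

variable {ω : ℝ → ℝ} {a ε x : ℝ}

theorem mollifiedIndicator_eq_setIntegral (ha : 0 ≤ a) (x : ℝ) :
    mollifiedIndicator ω a x = ∫ y in Icc (-a) a, ω (x - y) := by
  rw [integral_Icc_eq_integral_Ioc, ← intervalIntegral.integral_of_le (by linarith),
    intervalIntegral.integral_comp_sub_left (fun t => ω t) x, mollifiedIndicator, sub_neg_eq_add]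

theorem hasDerivAt_mollifiedIndicator (hω : Continuous ω) (a x : ℝ) :
    HasDerivAt (mollifiedIndicator ω a) (ω (x + a) - ω (x - a)) x := by
  have hF : ∀ u, HasDerivAt (fun u => ∫ t in (0 : ℝ)..u, ω t) (ω u) u := fun u =>
    (hω.integral_hasStrictDerivAt 0 u).hasDerivAt
  have hprim : mollifiedIndicator ω a =
      fun x => (∫ t in (0 : ℝ)..x + a, ω t) - ∫ t in (0 : ℝ)..x - a, ω t := by
    funext x
    exact (intervalIntegral.integral_interval_sub_left (hω.intervalIntegrable _ _)
      (hω.intervalIntegrable _ _)).symm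
  rw [hprim]
  exact ((hF _).comp_add_const x a).sub ((hF _).comp_sub_const x a)

theorem contDiff_mollifiedIndicator (hω : Continuous ω) (a : ℝ) :
    ContDiff ℝ 1 (mollifiedIndicator ω a) := by
  have hderiv : deriv (mollifiedIndicator ω a) = fun x => ω (x + a) - ω (x - a) :=
    funext fun x => (hasDerivAt_mollifiedIndicator hω a x).deriv
  refine contDiff_one_iff_deriv.2
    ⟨fun x => (hasDerivAt_mollifiedIndicator hω a x).differentiableAt, ?_⟩
  rw [hderiv]
  fun_prop

theorem mollifiedIndicator_nonneg (hω0 : ∀ t, 0 ≤ ω t) (ha : 0 ≤ a) (x : ℝ) :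
    0 ≤ mollifiedIndicator ω a x :=
  intervalIntegral.integral_nonneg (by linarith) fun t _ => hω0 t

theorem mollifiedIndicator_le_one (hω : Continuous ω) (hω0 : ∀ t, 0 ≤ ω t)
    (hsupp : ∀ t, ε ≤ |t| → ω t = 0) (hω1 : ∫ t, ω t = 1) (ha : 0 ≤ a) (x : ℝ) :
    mollifiedIndicator ω a x ≤ 1 := by
  have hint : Integrable ω := by
    refine hω.integrable_of_hasCompactSupport
      (HasCompactSupport.intro (isCompact_Icc (a := -ε) (b := ε)) fun t ht => ?_)
    rw [mem_Icc, not_and_or, not_le, not_le] at ht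
    exact hsupp t (le_abs'.2 (ht.imp (fun h => by linarith) le_of_lt))
  rw [mollifiedIndicator, intervalIntegral.integral_of_le (by linarith), ← hω1]
  exact setIntegral_le_integral hint (Eventually.of_forall hω0)

theorem mollifiedIndicator_eq_one (hsupp : ∀ t, ε ≤ |t| → ω t = 0) (hω1 : ∫ t, ω t = 1)
    (hε : 0 ≤ ε) (hx : |x| ≤ a - ε) : mollifiedIndicator ω a x = 1 := by
  obtain ⟨hxl, hxr⟩ := abs_le.1 hx
  rw [mollifiedIndicator, intervalIntegral.integral_of_le (by linarith), ← hω1]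
  refine setIntegral_eq_integral_of_forall_compl_eq_zero fun t ht => hsupp t ?_
  rw [mem_Ioc, not_and_or, not_lt, not_le] at ht
  exact le_abs'.2 (ht.imp (fun h => by linarith) (fun h => by linarith))

theorem mollifiedIndicator_eq_zero (hsupp : ∀ t, ε ≤ |t| → ω t = 0) (ha : 0 ≤ a)
    (hx : a + ε ≤ |x|) : mollifiedIndicator ω a x = 0 := by
  rw [mollifiedIndicator, intervalIntegral.integral_of_le (by linarith)]
  refine setIntegral_eq_zero_of_forall_eq_zero fun t ht => hsupp t ?_
  exact le_abs'.2 ((le_abs'.1 hx).imp (fun h => by linarith [ht.2]) (fun h => by linarith [ht.1]))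

end MollifiedIndicator

noncomputable def bump (C ε x : ℝ) : ℝ :=
  if |x| < ε then C * exp (-ε / (ε - |x|)) else 0

section Bump

variable {C ε : ℝ}

theorem bump_eq_mul_expNegInvGlue (hε : 0 < ε) (x : ℝ) :
    bump C ε x = C * expNegInvGlue ((ε - |x|) / ε) := by
  rw [bump]
  split_ifs with hx
  · rw [expNegInvGlue, if_neg (not_le.2 (div_pos (by linarith) hε)), inv_div, neg_div]
  · rw [expNegInvGlue.zero_of_nonpos (div_nonpos_of_nonpos_of_nonneg (by linarith) hε.le),
      mul_zero]

theorem continuous_bump (hε : 0 < ε) : Continuous (bump C ε) := by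
  simp_rw [funext (bump_eq_mul_expNegInvGlue hε)]
  exact continuous_const.mul ((expNegInvGlue.contDiff (n := 0)).continuous.comp (by fun_prop))

theorem bump_nonneg (hC : 0 ≤ C) (x : ℝ) : 0 ≤ bump C ε x := by
  rw [bump]
  split_ifs
  · positivity
  · rfl

theorem bump_eq_zero {x : ℝ} (hx : ε ≤ |x|) : bump C ε x = 0 :=
  if_neg hx.not_gt

end Bump

section GaussianMoment

variable {c β : ℝ}

theorem hasDerivAt_gaussian (hβ : β ≠ 0) (x : ℝ) :
    HasDerivAt (fun x => -β ^ 2 * exp (-(x - c) ^ 2 / (2 * β ^ 2)))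
      ((x - c) * exp (-(x - c) ^ 2 / (2 * β ^ 2))) x := by
  have hq : HasDerivAt (fun x => -(x - c) ^ 2 / (2 * β ^ 2)) (-(2 * (x - c)) / (2 * β ^ 2)) x := by
    simpa using (((hasDerivAt_id x).sub_const c).pow 2).neg.div_const (2 * β ^ 2)
  exact (hq.exp.const_mul (-β ^ 2)).congr_deriv (by field_simp)

theorem integral_gaussian_moment (hβ : β ≠ 0) (u v : ℝ) :
    ∫ x in u..v, (x - c) * exp (-(x - c) ^ 2 / (2 * β ^ 2)) =
      β ^ 2 * (exp (-(u - c) ^ 2 / (2 * β ^ 2)) - exp (-(v - c) ^ 2 / (2 * β ^ 2))) := by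
  rw [intervalIntegral.integral_eq_sub_of_hasDerivAt (fun x _ => hasDerivAt_gaussian hβ x)
    (Continuous.intervalIntegrable (by fun_prop) _ _)]
  ring

theorem integral_gaussian_moment_symm (hβ : β ≠ 0) (d : ℝ) :
    ∫ x in (c - d)..(c + d), (x - c) * exp (-(x - c) ^ 2 / (2 * β ^ 2)) = 0 := by
  rw [integral_gaussian_moment hβ]
  ring_nf

variable {h : ℝ → ℝ} {d u v : ℝ}

theorem abs_integral_gaussian_moment_mul_le_of_le (hβ : β ≠ 0) (hh : Continuous h)
    (h0 : ∀ x, 0 ≤ h x) (h1 : ∀ x, h x ≤ 1) (hd : 0 ≤ d) (hu : c + d ≤ u) (huv : u ≤ v) :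
    |∫ x in u..v, (x - c) * exp (-(x - c) ^ 2 / (2 * β ^ 2)) * h x| ≤
      β ^ 2 * exp (-d ^ 2 / (2 * β ^ 2)) := by
  have hpos : ∀ x ∈ Icc u v, 0 ≤ (x - c) * exp (-(x - c) ^ 2 / (2 * β ^ 2)) := fun x hx =>
    mul_nonneg (by linarith [hx.1]) (exp_pos _).le
  rw [abs_of_nonneg (intervalIntegral.integral_nonneg huv fun x hx =>
    mul_nonneg (hpos x hx) (h0 x))]
  calc ∫ x in u..v, (x - c) * exp (-(x - c) ^ 2 / (2 * β ^ 2)) * h x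
      ≤ ∫ x in u..v, (x - c) * exp (-(x - c) ^ 2 / (2 * β ^ 2)) :=
        intervalIntegral.integral_mono_on huv (Continuous.intervalIntegrable (by fun_prop) _ _)
          (Continuous.intervalIntegrable (by fun_prop) _ _)
          fun x hx => mul_le_of_le_one_right (hpos x hx) (h1 x)
    _ ≤ β ^ 2 * exp (-(u - c) ^ 2 / (2 * β ^ 2)) := by
        rw [integral_gaussian_moment hβ]
        nlinarith [exp_pos (-(v - c) ^ 2 / (2 * β ^ 2)), sq_nonneg β]
    _ ≤ β ^ 2 * exp (-d ^ 2 / (2 * β ^ 2)) := by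
        gcongr
        nlinarith

theorem abs_integral_gaussian_moment_mul_le_of_ge (hβ : β ≠ 0) (hh : Continuous h)
    (h0 : ∀ x, 0 ≤ h x) (h1 : ∀ x, h x ≤ 1) (hd : 0 ≤ d) (hv : v ≤ c - d) (huv : u ≤ v) :
    |∫ x in u..v, (x - c) * exp (-(x - c) ^ 2 / (2 * β ^ 2)) * h x| ≤
      β ^ 2 * exp (-d ^ 2 / (2 * β ^ 2)) := by
  -- the substitution `x ↦ 2 * c - x` turns this into a right tail
  have hrefl (x : ℝ) : (x - c) * exp (-(x - c) ^ 2 / (2 * β ^ 2)) * h x =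
      -((2 * c - x - c) * exp (-(2 * c - x - c) ^ 2 / (2 * β ^ 2)) * h (2 * c - (2 * c - x))) := by
    ring_nf
  simp_rw [hrefl]
  rw [intervalIntegral.integral_comp_sub_left
      (fun y => -((y - c) * exp (-(y - c) ^ 2 / (2 * β ^ 2)) * h (2 * c - y))),
    intervalIntegral.integral_neg, abs_neg]
  exact abs_integral_gaussian_moment_mul_le_of_le hβ (by fun_prop) (fun _ => h0 _) (fun _ => h1 _)
    hd (by linarith) (by linarith)

theorem abs_integral_gaussian_moment_mul_le {l : ℝ} (hβ : β ≠ 0) (hh : Continuous h)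
    (h0 : ∀ x, 0 ≤ h x) (h1 : ∀ x, h x ≤ 1) (hmid : ∀ x ∈ Icc (c - d) (c + d), h x = 1)
    (hd : 0 ≤ d) (hl : -l ≤ c - d) (hr : c + d ≤ l) :
    |∫ x in (-l)..l, (x - c) * exp (-(x - c) ^ 2 / (2 * β ^ 2)) * h x| ≤
      2 * (β ^ 2 * exp (-d ^ 2 / (2 * β ^ 2))) := by
  have hint : ∀ u v, IntervalIntegrable
      (fun x => (x - c) * exp (-(x - c) ^ 2 / (2 * β ^ 2)) * h x) volume u v :=
    fun u v => Continuous.intervalIntegrable (by fun_prop) u v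
  have hcenter : ∫ x in (c - d)..(c + d), (x - c) * exp (-(x - c) ^ 2 / (2 * β ^ 2)) * h x = 0 := by
    rw [← integral_gaussian_moment_symm hβ d]
    refine intervalIntegral.integral_congr fun x hx => ?_
    rw [uIcc_of_le (by linarith)] at hx
    simp only [hmid x hx, mul_one]
  rw [← intervalIntegral.integral_add_adjacent_intervals (hint _ (c + d)) (hint _ l),
    ← intervalIntegral.integral_add_adjacent_intervals (hint _ (c - d)) (hint _ _), hcenter,
    add_zero]
  linarith [abs_add_le (∫ x in (-l)..(c - d), (x - c) * exp (-(x - c) ^ 2 / (2 * β ^ 2)) * h x)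
    (∫ x in (c + d)..l, (x - c) * exp (-(x - c) ^ 2 / (2 * β ^ 2)) * h x),
    abs_integral_gaussian_moment_mul_le_of_ge hβ hh h0 h1 hd le_rfl hl,
    abs_integral_gaussian_moment_mul_le_of_le hβ hh h0 h1 hd le_rfl hr]

theorem two_mul_exp_neg_half_le_integral_gaussian_mul {l : ℝ} (hβ : 0 < β) (h0 : ∀ x, 0 ≤ h x)
    (hh : Continuous h) (hmid : ∀ x ∈ Icc (c - β) (c + β), h x = 1) (hl : -l ≤ c - β)
    (hr : c + β ≤ l) :
    2 * β * exp (-(1 / 2)) ≤ ∫ x in (-l)..l, exp (-(x - c) ^ 2 / (2 * β ^ 2)) * h x := by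
  calc 2 * β * exp (-(1 / 2)) = ∫ _ in (c - β)..(c + β), exp (-(1 / 2)) := by
        rw [intervalIntegral.integral_const, smul_eq_mul]
        ring
    _ ≤ ∫ x in (c - β)..(c + β), exp (-(x - c) ^ 2 / (2 * β ^ 2)) * h x := by
        refine intervalIntegral.integral_mono_on (by linarith) intervalIntegrable_const
          (Continuous.intervalIntegrable (by fun_prop) _ _) fun x hx => ?_
        have hsq : (x - c) ^ 2 ≤ β ^ 2 := sq_le_sq' (by linarith [hx.1]) (by linarith [hx.2])
        rw [hmid x hx, mul_one, exp_le_exp, neg_div, neg_le_neg_iff, div_le_iff₀ (by positivity)]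
        linarith
    _ ≤ ∫ x in (-l)..l, exp (-(x - c) ^ 2 / (2 * β ^ 2)) * h x :=
        intervalIntegral.integral_mono_interval hl (by linarith) hr
          (Eventually.of_forall fun x => mul_nonneg (exp_pos _).le (h0 x))
          (Continuous.intervalIntegrable (by fun_prop) _ _)

theorem integral_mul_sub_eq_of_integral_eq_one {p : ℝ → ℝ} {a b : ℝ} (hp : Continuous p)
    (h1 : ∫ x in a..b, p x = 1) : (∫ x in a..b, x * p x) - c = ∫ x in a..b, (x - c) * p x := by
  simp_rw [sub_mul]
  rw [intervalIntegral.integral_sub (Continuous.intervalIntegrable (by fun_prop) _ _)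
    (Continuous.intervalIntegrable (by fun_prop) _ _), intervalIntegral.integral_const_mul, h1,
    mul_one]

theorem abs_integral_mul_gaussian_density_sub_le {l A : ℝ} (hβ : 0 < β)
    (hβd : β ≤ d) (hA : 0 ≤ A) (hh : Continuous h) (h0 : ∀ x, 0 ≤ h x) (h1 : ∀ x, h x ≤ 1)
    (hmid : ∀ x ∈ Icc (c - d) (c + d), h x = 1) (hl : -l ≤ c - d) (hr : c + d ≤ l)
    (hnorm : ∫ x in Icc (-l) l, A * exp (-(x - c) ^ 2 / (2 * β ^ 2)) * h x = 1) :
    |(∫ x in Icc (-l) l, x * (A * exp (-(x - c) ^ 2 / (2 * β ^ 2)) * h x)) - c| ≤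
      exp (1 / 2) * (β * exp (-d ^ 2 / (2 * β ^ 2))) := by
  rw [integral_Icc_eq_integral_Ioc, ← intervalIntegral.integral_of_le (by linarith)] at hnorm ⊢
  have hmass := two_mul_exp_neg_half_le_integral_gaussian_mul hβ h0 hh
    (fun x hx => hmid x ⟨by linarith [hx.1], by linarith [hx.2]⟩) (c := c) (l := l) (by linarith)
    (by linarith)
  have hmean : (∫ x in (-l)..l, x * (A * exp (-(x - c) ^ 2 / (2 * β ^ 2)) * h x)) - c =
      A * ∫ x in (-l)..l, (x - c) * exp (-(x - c) ^ 2 / (2 * β ^ 2)) * h x := by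
    rw [integral_mul_sub_eq_of_integral_eq_one (by fun_prop) hnorm,
      ← intervalIntegral.integral_const_mul]
    congr 1 with x
    ring
  simp_rw [mul_assoc A, intervalIntegral.integral_const_mul] at hnorm
  have hAβ : A * (2 * β) ≤ exp (1 / 2) :=
    calc A * (2 * β) = A * (2 * β * exp (-(1 / 2))) * exp (1 / 2) := by
          rw [mul_assoc, mul_assoc, ← exp_add, neg_add_cancel, exp_zero, mul_one]
      _ ≤ 1 * exp (1 / 2) := by
          gcongr
          exact (mul_le_mul_of_nonneg_left hmass hA).trans hnorm.le
      _ = exp (1 / 2) := one_mul _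
  rw [hmean, abs_mul, abs_of_nonneg hA]
  calc A * |∫ x in (-l)..l, (x - c) * exp (-(x - c) ^ 2 / (2 * β ^ 2)) * h x|
      ≤ A * (2 * (β ^ 2 * exp (-d ^ 2 / (2 * β ^ 2)))) :=
        mul_le_mul_of_nonneg_left (abs_integral_gaussian_moment_mul_le hβ.ne' hh h0 h1 hmid
          (by linarith) hl hr) hA
    _ = A * (2 * β) * (β * exp (-d ^ 2 / (2 * β ^ 2))) := by ring
    _ ≤ exp (1 / 2) * (β * exp (-d ^ 2 / (2 * β ^ 2))) := by gcongr

end GaussianMoment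

theorem integral_mul_deriv_eq_zero {G : ℝ → ℝ} {a b : ℝ} (hG : ContDiff ℝ 1 G) (ha : G a = 0)
    (hb : G b = 0) : ∫ x in a..b, G x * deriv G x = 0 := by
  have hd : ∀ x, HasDerivAt (fun x => G x ^ 2 / 2) (G x * deriv G x) x := fun x =>
    (((hG.differentiable one_ne_zero x).hasDerivAt.pow 2).div_const 2).congr_deriv (by ring)
  rw [intervalIntegral.integral_eq_sub_of_hasDerivAt (fun x _ => hd x)
    ((hG.continuous.mul (hG.continuous_deriv le_rfl)).intervalIntegrable _ _), ha, hb]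
  ring

theorem integral_conj_mul_momentum_eq {G : ℝ → ℝ} {a b : ℝ} (hab : a ≤ b) (hG : ContDiff ℝ 1 G)
    (ha : G a = 0) (hb : G b = 0) (ħ k : ℝ) :
    ∫ x in Icc a b, starRingEnd ℂ ((G x : ℂ) * Complex.exp (↑(k * x) * Complex.I)) *
        (-Complex.I * ħ) * deriv (fun x : ℝ => (G x : ℂ) * Complex.exp (↑(k * x) * Complex.I)) x =
      ↑(ħ * k * ∫ x in Icc a b, G x ^ 2) := by
  have hintegrand (x : ℝ) : starRingEnd ℂ ((G x : ℂ) * Complex.exp (↑(k * x) * Complex.I)) *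
      (-Complex.I * ħ) * deriv (fun x : ℝ => (G x : ℂ) * Complex.exp (↑(k * x) * Complex.I)) x =
      ((-ħ * (G x * deriv G x) : ℝ) : ℂ) * Complex.I + ((ħ * k * G x ^ 2 : ℝ) : ℂ) := by
    have hphase : HasDerivAt (fun x : ℝ => Complex.exp (↑(k * x) * Complex.I))
        (Complex.exp (↑(k * x) * Complex.I) * (k * Complex.I)) x :=
      ((((hasDerivAt_id x).const_mul k).ofReal_comp).mul_const Complex.I).cexp.congr_deriv
        (by simp)
    have hψ : HasDerivAt (fun x : ℝ => (G x : ℂ) * Complex.exp (↑(k * x) * Complex.I)) _ x :=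
      ((hG.differentiable one_ne_zero x).hasDerivAt.ofReal_comp).mul hphase
    have hunit : starRingEnd ℂ (Complex.exp (↑(k * x) * Complex.I)) *
        Complex.exp (↑(k * x) * Complex.I) = 1 := by
      rw [Complex.conj_mul', Complex.norm_exp_ofReal_mul_I, Complex.ofReal_one, one_pow]
    rw [hψ.deriv, map_mul, Complex.conj_ofReal]
    generalize Complex.exp (↑(k * x) * Complex.I) = e at hunit ⊢
    push_cast
    linear_combination (-ħ * G x * deriv G x * Complex.I + ħ * k * G x ^ 2 : ℂ) * hunit -
      (ħ * k * G x ^ 2 * starRingEnd ℂ e * e : ℂ) * Complex.I_sq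
  have hGG' : ∫ x in Icc a b, -ħ * (G x * deriv G x) = 0 := by
    rw [integral_const_mul, integral_Icc_eq_integral_Ioc, ← intervalIntegral.integral_of_le hab,
      integral_mul_deriv_eq_zero hG ha hb, mul_zero]
  have hcont : Continuous (deriv G) := hG.continuous_deriv le_rfl
  simp_rw [hintegrand]
  rw [integral_add (Continuous.integrableOn_Icc (by fun_prop))
      (Continuous.integrableOn_Icc (by fun_prop)), integral_mul_const, integral_complex_ofReal,
    integral_complex_ofReal, hGG', integral_const_mul]
  simp

theorem sq_exp_neg_div_four (y β : ℝ) :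
    exp (-(y / (4 * β ^ 2))) ^ 2 = exp (-y / (2 * β ^ 2)) := by
  rw [sq, ← exp_add]
  ring_nf

/-- `ψ_β`, with normalising factor `N = B_β (2πβ²)^{-1/4}` and wave number `k = p*/ħ`. -/
noncomputable def truncatedGaussian (N c β k : ℝ) (η : ℝ → ℝ) (x : ℝ) : ℂ :=
  ↑(N * exp (-((x - c) ^ 2 / (4 * β ^ 2))) * η x) * Complex.exp (↑(k * x) * Complex.I)

section TruncatedGaussian

variable {N c β k : ℝ} {η : ℝ → ℝ}

theorem truncatedGaussian_eq (A P ħ p : ℝ) (x : ℝ) :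
    (A : ℂ) * (P : ℂ) * Complex.exp (-(((x - c) ^ 2 / (4 * β ^ 2) : ℝ) : ℂ) +
      Complex.I * (x : ℂ) * (p : ℂ) / (ħ : ℂ)) * ((η x : ℝ) : ℂ) =
      truncatedGaussian (A * P) c β (p / ħ) η x := by
  rw [truncatedGaussian, Complex.exp_add]
  push_cast
  ring_nf

theorem norm_truncatedGaussian_sq (x : ℝ) :
    ‖truncatedGaussian N c β k η x‖ ^ 2 = N ^ 2 * exp (-(x - c) ^ 2 / (2 * β ^ 2)) * η x ^ 2 := by
  rw [truncatedGaussian, norm_mul, Complex.norm_exp_ofReal_mul_I, mul_one, Complex.norm_real,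
    Real.norm_eq_abs, sq_abs, ← sq_exp_neg_div_four]
  ring

theorem integral_momentum_truncatedGaussian {l : ℝ} (hl : 0 ≤ l) (hη : ContDiff ℝ 1 η)
    (hηl : η (-l) = 0) (hηr : η l = 0) (ħ : ℝ) :
    ∫ x in Icc (-l) l, starRingEnd ℂ (truncatedGaussian N c β k η x) * (-Complex.I * ħ) *
        deriv (truncatedGaussian N c β k η) x =
      ↑(ħ * k * ∫ x in Icc (-l) l, ‖truncatedGaussian N c β k η x‖ ^ 2) := by
  have hnorm (x : ℝ) : ‖truncatedGaussian N c β k η x‖ ^ 2 =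
      (N * exp (-((x - c) ^ 2 / (4 * β ^ 2))) * η x) ^ 2 := by
    rw [norm_truncatedGaussian_sq, ← sq_exp_neg_div_four]
    ring
  simp_rw [hnorm]
  exact integral_conj_mul_momentum_eq (by linarith) (by fun_prop) (by rw [hηl, mul_zero])
    (by rw [hηr, mul_zero]) ħ k

theorem abs_integral_mul_norm_truncatedGaussian_sq_sub_le {l d : ℝ} (hβ : 0 < β) (hβd : β ≤ d)
    (hη : Continuous η) (hη0 : ∀ x, 0 ≤ η x) (hη1 : ∀ x, η x ≤ 1)
    (hmid : ∀ x ∈ Icc (c - d) (c + d), η x = 1) (hl : -l ≤ c - d) (hr : c + d ≤ l)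
    (hnorm : ∫ x in Icc (-l) l, ‖truncatedGaussian N c β k η x‖ ^ 2 = 1) :
    |(∫ x in Icc (-l) l, x * ‖truncatedGaussian N c β k η x‖ ^ 2) - c| ≤
      exp (1 / 2) * (β * exp (-d ^ 2 / (2 * β ^ 2))) := by
  simp_rw [norm_truncatedGaussian_sq] at hnorm ⊢
  exact abs_integral_mul_gaussian_density_sub_le hβ hβd (sq_nonneg N) (by fun_prop)
    (fun x => sq_nonneg _) (fun x => pow_le_one₀ (hη0 x) (hη1 x))
    (fun x hx => by rw [hmid x hx, one_pow]) hl hr hnorm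

end TruncatedGaussian

theorem truncated_gaussian_means_general
    (l ε xs ps hbar : ℝ) (hε : 0 < ε)
    (hxs : |xs| < l - 3 * ε) (hhbar : 0 < hbar)
    (C : ℝ) (hC : 0 < C) (ω : ℝ → ℝ)
    (hω : ω = fun x => if |x| < ε then C * Real.exp (-ε / (ε - |x|)) else 0)
    (hωint : ∫ x : ℝ, ω x = 1)
    (η : ℝ → ℝ)
    (hη : η = fun x => ∫ y in Set.Icc (-l + 2 * ε) (l - 2 * ε), ω (x - y))
    (B : ℝ → ℝ)
    (ψ : ℝ → ℝ → ℂ)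
    (hψ : ∀ β : ℝ, 0 < β → ψ β = fun x : ℝ =>
      (B β : ℂ) * (((2 * π * β ^ 2) ^ (-(1/4 : ℝ)) : ℝ) : ℂ) *
        Complex.exp (-(((x - xs) ^ 2 / (4 * β ^ 2) : ℝ) : ℂ) +
          Complex.I * (x : ℂ) * (ps : ℂ) / (hbar : ℂ)) * ((η x : ℝ) : ℂ))
    (hnorm : ∀ β : ℝ, 0 < β → ∫ x in Set.Icc (-l) l, ‖ψ β x‖ ^ 2 = 1)
    :
    (∀ β : ℝ, 0 < β →
      ∫ x in Set.Icc (-l) l,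
        (starRingEnd ℂ) (ψ β x) * (-Complex.I * (hbar : ℂ)) * deriv (ψ β) x = (ps : ℂ)) ∧
    (fun β : ℝ => (∫ x in Set.Icc (-l) l, x * ‖ψ β x‖ ^ 2) - xs) =O[𝓝[>] (0:ℝ)]
      (fun β : ℝ => β * Real.exp (-(l - |xs| - 3 * ε) ^ 2 / (2 * β ^ 2))) := by
  have hεl : 3 * ε < l := by linarith [abs_nonneg xs]
  have hωbump : ω = bump C ε := hω
  subst hωbump
  have hηeq : η = mollifiedIndicator (bump C ε) (l - 2 * ε) := by
    funext x
    rw [hη, mollifiedIndicator_eq_setIntegral (by linarith), neg_sub', sub_neg_eq_add]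
  subst hηeq
  have hψ' (β : ℝ) (hβ : 0 < β) : ψ β = truncatedGaussian (B β * (2 * π * β ^ 2) ^ (-(1/4 : ℝ)))
      xs β (ps / hbar) (mollifiedIndicator (bump C ε) (l - 2 * ε)) := by
    rw [hψ β hβ]
    exact funext fun x => truncatedGaussian_eq _ _ _ _ x
  have hedge (x : ℝ) (hx : |x| = l) : mollifiedIndicator (bump C ε) (l - 2 * ε) x = 0 :=
    mollifiedIndicator_eq_zero (fun _ => bump_eq_zero) (by linarith) (by rw [hx]; linarith)
  refine ⟨fun β hβ => ?_, ?_⟩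
  · rw [hψ' β hβ, integral_momentum_truncatedGaussian (by linarith)
      (contDiff_mollifiedIndicator (continuous_bump hε) _)
      (hedge _ (by rw [abs_neg, abs_of_pos (by linarith)])) (hedge _ (abs_of_pos (by linarith))),
      ← hψ' β hβ, hnorm β hβ, mul_one, mul_div_cancel₀ _ hhbar.ne']
  · refine IsBigO.of_bound (exp (1 / 2)) ?_
    filter_upwards [Ioo_mem_nhdsGT (show 0 < l - |xs| - 3 * ε by linarith)] with β ⟨hβ, hβd⟩
    have hnormβ := hnorm β hβ
    rw [hψ' β hβ] at hnormβ ⊢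
    rw [Real.norm_eq_abs, Real.norm_of_nonneg (by positivity)]
    exact abs_integral_mul_norm_truncatedGaussian_sq_sub_le hβ hβd.le
      (contDiff_mollifiedIndicator (continuous_bump hε) _).continuous
      (mollifiedIndicator_nonneg (bump_nonneg hC.le) (by linarith))
      (mollifiedIndicator_le_one (continuous_bump hε) (bump_nonneg hC.le) (fun _ => bump_eq_zero)
        hωint (by linarith))
      (fun x hx => mollifiedIndicator_eq_one (fun _ => bump_eq_zero) hωint hε.le
        (abs_le.2 ⟨by linarith [neg_abs_le xs, hx.1], by linarith [le_abs_self xs, hx.2]⟩))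
      (by linarith [neg_abs_le xs]) (by linarith [le_abs_self xs]) hnormβ

/-- For the truncated-Gaussian states, the mean momentum equals `p*`
exactly for every `β > 0`, and the mean position satisfies
`x̄_β = x* + O(β·exp(-(l-|x*|-3ε)²/(2β²)))` as `β → 0⁺`. -/
theorem truncated_gaussian_means
    (l ε xs ps hbar : ℝ) (hl : 0 < l) (hε : 0 < ε)
    (hxs : |xs| < l - 3 * ε) (hhbar : 0 < hbar)
    (C : ℝ) (hC : 0 < C) (ω : ℝ → ℝ)
    (hω : ω = fun x => if |x| < ε then C * Real.exp (-ε / (ε - |x|)) else 0)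
    (hωint : ∫ x : ℝ, ω x = 1)
    (η : ℝ → ℝ)
    (hη : η = fun x => ∫ y in Set.Icc (-l + 2 * ε) (l - 2 * ε), ω (x - y))
    (B : ℝ → ℝ) (hB : ∀ β : ℝ, 0 < β → 0 < B β)
    (ψ : ℝ → ℝ → ℂ)
    (hψ : ∀ β : ℝ, 0 < β → ψ β = fun x : ℝ =>
      (B β : ℂ) * (((2 * π * β ^ 2) ^ (-(1/4 : ℝ)) : ℝ) : ℂ) *
        Complex.exp (-(((x - xs) ^ 2 / (4 * β ^ 2) : ℝ) : ℂ) +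
          Complex.I * (x : ℂ) * (ps : ℂ) / (hbar : ℂ)) * ((η x : ℝ) : ℂ))
    (hnorm : ∀ β : ℝ, 0 < β → ∫ x in Set.Icc (-l) l, ‖ψ β x‖ ^ 2 = 1)
    :
    (∀ β : ℝ, 0 < β →
      ∫ x in Set.Icc (-l) l,
        (starRingEnd ℂ) (ψ β x) * (-Complex.I * (hbar : ℂ)) * deriv (ψ β) x = (ps : ℂ)) ∧
    (fun β : ℝ => (∫ x in Set.Icc (-l) l, x * ‖ψ β x‖ ^ 2) - xs) =O[𝓝[>] (0:ℝ)]
      (fun β : ℝ => β * Real.exp (-(l - |xs| - 3 * ε) ^ 2 / (2 * β ^ 2))) :=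
  truncated_gaussian_means_general l ε xs ps hbar hε hxs hhbar C hC ω hω hωint η hη B ψ hψ hnorm
end

section
/- Let α > 0, k* ∈ ℤ, and let A_α > 0 be determined by A_α²·Σ_{k∈ℤ} e^{−(k−k*)²/(2α²)} = 1. Then, as α → ∞, A_α = (2πα²)^{−1/4} + O(α^{−1/2}·e^{−2(πα)²}). -/
/-!
By Poisson summation, `∑ₖ exp (-(k - k*)² / (2α²)) = √(2πα²) · θ(2π²α²)` with
`θ(c) = ∑ₙ exp (-c n²)`, so `A_α = (2πα²)^(-1/4) · θ(2π²α²)^(-1/2)`. Since `θ(c)` is Jacobi's theta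
function at `τ = i c / π`, `θ(c) - 1 = O(exp (-c))`, and `|θ^(-1/2) - 1| ≤ θ - 1` for `θ ≥ 1`.
-/

open Real Filter Asymptotics

lemma abs_rpow_neg_half_sub_one_le {t : ℝ} (ht : 1 ≤ t) : |t ^ (-(1 / 2) : ℝ) - 1| ≤ t - 1 := by
  have h_le_one : t ^ (-(1 / 2) : ℝ) ≤ 1 := rpow_le_one_of_one_le_of_nonpos ht (by norm_num)
  have h_inv_le : t⁻¹ ≤ t ^ (-(1 / 2) : ℝ) := by
    rw [← rpow_neg_one]; exact rpow_le_rpow_of_exponent_le ht (by norm_num)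
  have h_inv : 2 - t ≤ t⁻¹ := by
    rw [← one_div, le_div_iff₀ (by linarith)]
    nlinarith [sq_nonneg (t - 1)]
  rw [abs_of_nonpos (by linarith)]
  linarith

lemma eq_rpow_neg_half_of_sq_mul_eq_one {a s : ℝ} (ha : 0 < a) (h : a ^ 2 * s = 1) :
    a = s ^ (-(1 / 2) : ℝ) := by
  rw [eq_inv_of_mul_eq_one_right h, inv_rpow (by positivity), ← rpow_natCast, ← rpow_mul ha.le,
    ← rpow_neg ha.le]
  norm_num

lemma isBigO_rpow_neg_quarter_mul_sq {b : ℝ} (hb : 0 ≤ b) :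
    (fun x : ℝ => (b * x ^ 2) ^ (-(1 / 4) : ℝ)) =O[atTop] fun x => x ^ (-(1 / 2) : ℝ) := by
  refine (isBigO_const_mul_self (b ^ (-(1 / 4) : ℝ)) _ _).congr' ?_ .rfl
  filter_upwards [eventually_gt_atTop 0] with x hx
  rw [mul_rpow hb (by positivity), ← rpow_natCast, ← rpow_mul hx.le]
  norm_num

noncomputable def gaussTheta (c : ℝ) : ℝ := ∑' n : ℤ, exp (-c * (n : ℝ) ^ 2)

lemma summable_exp_neg_mul_int_sq {c : ℝ} (hc : 0 < c) :
    Summable fun n : ℤ => exp (-c * (n : ℝ) ^ 2) := by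
  have h : Summable fun n : ℕ => exp (-c * (n : ℝ) ^ 2) :=
    summable_exp_nat_mul_of_ge (neg_lt_zero.2 hc) fun n => by
      exact_mod_cast Nat.le_self_pow two_ne_zero n
  exact .of_nat_of_neg (by simpa using h) (by simpa using h)

lemma one_le_gaussTheta {c : ℝ} (hc : 0 < c) : 1 ≤ gaussTheta c := by
  simpa [gaussTheta] using (summable_exp_neg_mul_int_sq hc).le_tsum 0 fun _ _ => (exp_pos _).le

lemma tsum_exp_neg_sub_sq_div_eq_rpow_mul_gaussTheta (m : ℤ) {s : ℝ} (hs : 0 < s) :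
    ∑' k : ℤ, exp (-((k : ℝ) - (m : ℝ)) ^ 2 / (2 * s)) =
      (2 * π * s) ^ (1 / 2 : ℝ) * gaussTheta (2 * π ^ 2 * s) := by
  have h_shift : ∑' k : ℤ, exp (-((k : ℝ) - (m : ℝ)) ^ 2 / (2 * s)) =
      ∑' n : ℤ, exp (-π * (2 * π * s)⁻¹ * (n : ℝ) ^ 2) := by
    rw [← (Equiv.addRight m).tsum_eq]
    refine tsum_congr fun n => ?_
    simp only [Equiv.coe_addRight, Int.cast_add, add_sub_cancel_right]
    congr 1
    field_simp
  rw [h_shift, tsum_exp_neg_mul_int_sq (by positivity), inv_rpow (by positivity), one_div, inv_inv,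
    gaussTheta]
  congr 2 with n
  field_simp

lemma eq_rpow_mul_gaussTheta_of_sq_mul_tsum_eq_one (m : ℤ) {α a : ℝ} (hα : 0 < α) (ha : 0 < a)
    (h : a ^ 2 * ∑' k : ℤ, exp (-((k : ℝ) - (m : ℝ)) ^ 2 / (2 * α ^ 2)) = 1) :
    a = (2 * π * α ^ 2) ^ (-(1 / 4) : ℝ) * gaussTheta (2 * π ^ 2 * α ^ 2) ^ (-(1 / 2) : ℝ) := by
  rw [tsum_exp_neg_sub_sq_div_eq_rpow_mul_gaussTheta m (by positivity)] at h
  rw [eq_rpow_neg_half_of_sq_mul_eq_one ha h, mul_rpow (by positivity)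
    (zero_le_one.trans (one_le_gaussTheta (by positivity))), ← rpow_mul (by positivity)]
  norm_num

lemma ofReal_gaussTheta (c : ℝ) : (gaussTheta c : ℂ) = jacobiTheta (c / π * Complex.I) := by
  rw [gaussTheta, Complex.ofReal_tsum, jacobiTheta]
  refine tsum_congr fun n => ?_
  push_cast
  congr 1
  field_simp
  ring_nf
  rw [Complex.I_sq]
  ring

lemma isBigO_gaussTheta_sub_one :
    (fun c => gaussTheta c - 1) =O[atTop] fun c => exp (-c) := by
  have hτ : Tendsto (fun c : ℝ => (c / π : ℂ) * Complex.I) atTop (comap Complex.im atTop) := by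
    refine tendsto_comap_iff.2 ?_
    simpa [Function.comp_def] using tendsto_id.atTop_div_const pi_pos
  rw [← isBigO_norm_left]
  refine (isBigO_norm_left.2 (isBigO_at_im_infty_jacobiTheta_sub_one.comp_tendsto hτ)).congr
    (fun c => ?_) (fun c => ?_)
  · simp [← ofReal_gaussTheta, ← Complex.ofReal_one, ← Complex.ofReal_sub]
  · simp [field]

lemma isBigO_gaussTheta_rpow_neg_half_sub_one :
    (fun c => gaussTheta c ^ (-(1 / 2) : ℝ) - 1) =O[atTop] fun c => exp (-c) := by
  refine IsBigO.trans ?_ isBigO_gaussTheta_sub_one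
  refine IsBigO.of_bound 1 ?_
  filter_upwards [eventually_gt_atTop 0] with c hc
  have h_one_le := one_le_gaussTheta hc
  rw [norm_of_nonneg (sub_nonneg.2 h_one_le), one_mul]
  exact abs_rpow_neg_half_sub_one_le h_one_le

/-- Normalization constant of the theta-type squeezed states:
`A_α = (2πα²)^(-1/4) + O(α^(-1/2)·exp(-2(πα)²))` as `α → ∞`. -/
theorem theta_state_normalization
    (kstar : ℤ) (A : ℝ → ℝ)
    (hApos : ∀ α : ℝ, 0 < α → 0 < A α)
    (hAnorm : ∀ α : ℝ, 0 < α →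
      (A α) ^ 2 * ∑' k : ℤ, Real.exp (-((k : ℝ) - (kstar : ℝ)) ^ 2 / (2 * α ^ 2)) = 1) :
    (fun α : ℝ => A α - (2 * π * α ^ 2) ^ (-(1/4 : ℝ))) =O[atTop]
      (fun α : ℝ => α ^ (-(1/2 : ℝ)) * Real.exp (-2 * (π * α) ^ 2)) := by
  have h_theta : (fun α : ℝ => gaussTheta (2 * π ^ 2 * α ^ 2) ^ (-(1 / 2) : ℝ) - 1) =O[atTop]
      fun α => exp (-2 * (π * α) ^ 2) := by
    have h_tendsto : Tendsto (fun α : ℝ => 2 * π ^ 2 * α ^ 2) atTop atTop :=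
      (tendsto_pow_atTop two_ne_zero).const_mul_atTop (by positivity)
    refine (isBigO_gaussTheta_rpow_neg_half_sub_one.comp_tendsto h_tendsto).congr_right fun α => ?_
    simp only [Function.comp_apply]
    ring_nf
  refine ((isBigO_rpow_neg_quarter_mul_sq two_pi_pos.le).mul h_theta).congr' ?_ .rfl
  filter_upwards [eventually_gt_atTop 0] with α hα
  rw [eq_rpow_mul_gaussTheta_of_sq_mul_tsum_eq_one kstar hα (hApos α hα) (hAnorm α hα)]
  ring
end

section
/- Let l > 0, x* ∈ (−l, l), p* ∈ ℝ, ħ > 0, and let φ be an even probability density on ℝ, attaining its maximum at 0 and nonincreasing in |q|, with zero mean and finite nonzero second moment Δq² > 0. Let ψ_α be the wave packet built by discretizing φ. Then for every α > 0 the mean momentum equals p̄_α = (π/l)ħ·k̄ (so |p̄_α − p*| ≤ (π/l)ħ), and the limit lim_{α→∞} Δ*p_α/α exists and is a nonzero constant. -/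
/-!
Up to the shift by `k̄`, `|a_k|²` is the mass that the dilated density `φ_{αl}` gives to the
unit cell around `k - k̄`. Evenness of `φ` makes these cell masses symmetric, so the mean
momentum sits exactly at `(π/l)ħ k̄`. For the spread, replacing `j²` by `x²` on the cell around
`j` costs at most `|x| + 1`, so `∑ j² · mass_j = s² Δq² + O(s)` with `s = α l / π`; hence
`Δ*p_α / α → ħ Δq`.
-/

open Real MeasureTheory Filter Topology

namespace DiscretizedPacket

open intervalIntegral

theorem summable_and_abs_tsum_sub_le {ι : Type*} {b g h : ι → ℝ} {s t : ℝ} (hg : HasSum g s)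
    (hh : HasSum h t) (hbg : ∀ i, |b i - g i| ≤ h i) :
    Summable b ∧ |∑' i, b i - s| ≤ t := by
  have hd : Summable fun i => |b i - g i| :=
    hh.summable.of_nonneg_of_le (fun _ => abs_nonneg _) hbg
  have hb : Summable b := by
    simpa only [sub_add_cancel] using hd.of_abs.add hg.summable
  refine ⟨hb, ?_⟩
  calc |∑' i, b i - s| = |∑' i, (b i - g i)| := by rw [hb.tsum_sub hg.summable, hg.tsum_eq]
    _ ≤ ∑' i, |b i - g i| := by
      simp only [← Real.norm_eq_abs] at hd ⊢
      exact norm_tsum_le_tsum_norm hd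
    _ ≤ t := (hd.tsum_le_tsum hbg hh.summable).trans_eq hh.tsum_eq

theorem tendsto_sqrt_div_of_abs_sub_sq_mul_le {T : ℝ → ℝ} {M A B : ℝ}
    (hT : ∀ s, 0 < s → |T s - s ^ 2 * M| ≤ A * s + B) :
    Tendsto (fun s => √(T s) / s) atTop (𝓝 √M) := by
  have hbound : Tendsto (fun s : ℝ => A / s + B / s ^ 2) atTop (𝓝 0) := by
    have hA : Tendsto (fun s : ℝ => A / s) atTop (𝓝 0) := tendsto_const_nhds.div_atTop tendsto_id
    have hB : Tendsto (fun s : ℝ => B / s ^ 2) atTop (𝓝 0) :=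
      tendsto_const_nhds.div_atTop (tendsto_pow_atTop two_ne_zero)
    simpa only [add_zero] using hA.add hB
  have hratio : Tendsto (fun s => T s / s ^ 2) atTop (𝓝 M) := by
    refine tendsto_sub_nhds_zero_iff.1 (squeeze_zero_norm' ?_ hbound)
    filter_upwards [eventually_gt_atTop 0] with s hs
    have hs2 : 0 < s ^ 2 := by positivity
    calc ‖T s / s ^ 2 - M‖ = |T s - s ^ 2 * M| / s ^ 2 := by
          rw [Real.norm_eq_abs, ← abs_of_pos hs2, ← abs_div, abs_of_pos hs2]
          congr 1
          field_simp
      _ ≤ (A * s + B) / s ^ 2 := by gcongr; exact hT s hs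
      _ = A / s + B / s ^ 2 := by field_simp
  refine hratio.sqrt.congr' ?_
  filter_upwards [eventually_gt_atTop 0] with s hs
  rw [Real.sqrt_div' _ (sq_nonneg s), Real.sqrt_sq hs.le]

section IntegerMasses

variable {m : ℤ → ℝ}

theorem summable_mul_of_summable_sq_mul (hm0 : ∀ j, 0 ≤ m j) (hm : Summable m)
    (hm2 : Summable fun j : ℤ => (j : ℝ) ^ 2 * m j) : Summable fun j : ℤ => (j : ℝ) * m j :=
  (hm2.add hm).of_norm_bounded fun j => by
    have hj : |(j : ℝ)| ≤ (j : ℝ) ^ 2 + 1 := by nlinarith [sq_abs (j : ℝ), abs_nonneg (j : ℝ)]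
    rw [norm_mul, Real.norm_eq_abs, Real.norm_eq_abs, abs_of_nonneg (hm0 j), ← add_one_mul]
    exact mul_le_mul_of_nonneg_right hj (hm0 j)

theorem tsum_mul_eq_zero_of_even (hm : ∀ j, m (-j) = m j) : ∑' j : ℤ, (j : ℝ) * m j = 0 := by
  have h := (Equiv.neg ℤ).tsum_eq fun j : ℤ => (j : ℝ) * m j
  simp only [Equiv.neg_apply, Int.cast_neg, hm, neg_mul, tsum_neg] at h
  linarith

theorem tsum_mul_sub_eq_of_even (hm1 : HasSum m 1) (hm : ∀ j, m (-j) = m j)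
    (hm_mul : Summable fun j : ℤ => (j : ℝ) * m j) (k₀ : ℤ) :
    ∑' k : ℤ, (k : ℝ) * m (k - k₀) = k₀ := by
  rw [← (Equiv.addRight k₀).tsum_eq]
  simp only [Equiv.coe_addRight, add_sub_cancel_right, Int.cast_add, add_mul]
  rw [hm_mul.tsum_add (hm1.summable.mul_left _), tsum_mul_eq_zero_of_even hm, tsum_mul_left,
    hm1.tsum_eq, zero_add, mul_one]

theorem tsum_sq_mul_sub (c : ℝ) (k₀ : ℤ) :
    ∑' k : ℤ, (c * k - c * k₀) ^ 2 * m (k - k₀) = c ^ 2 * ∑' j : ℤ, (j : ℝ) ^ 2 * m j := by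
  rw [← (Equiv.addRight k₀).tsum_eq, ← tsum_mul_left]
  congr 1 with j
  simp only [Equiv.coe_addRight, add_sub_cancel_right, Int.cast_add]
  ring

end IntegerMasses

noncomputable def cellMass (F : ℝ → ℝ) (j : ℤ) : ℝ :=
  ∫ x in (j - 1/2 : ℝ)..(j + 1/2), F x

section CellMass

variable {F : ℝ → ℝ}

theorem hasSum_cellMass (hF : Integrable F) : HasSum (cellMass F) (∫ x, F x) := by
  have hcell : cellMass F = fun j : ℤ => ∫ x in (-(1/2) + j : ℝ)..(-(1/2) + j + 1), F x := by
    ext j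
    unfold cellMass
    congr 1 <;> ring
  exact hcell ▸ hF.hasSum_intervalIntegral _

theorem cellMass_nonneg (hF : ∀ x, 0 ≤ F x) (j : ℤ) : 0 ≤ cellMass F j :=
  integral_nonneg (by linarith) fun x _ => hF x

theorem cellMass_neg (hF : ∀ x, F (-x) = F x) (j : ℤ) : cellMass F (-j) = cellMass F j := by
  unfold cellMass
  have hends : ((-j : ℤ) : ℝ) - 1/2 = -(j + 1/2) ∧ ((-j : ℤ) : ℝ) + 1/2 = -(j - 1/2) := by
    constructor <;> push_cast <;> ring
  rw [hends.1, hends.2, ← integral_comp_neg]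
  simp only [hF]

theorem abs_sq_sub_sq_le_of_mem_cell {j : ℤ} {x : ℝ}
    (hx : x ∈ Set.Icc ((j : ℝ) - 1/2) (j + 1/2)) :
    |(j : ℝ) ^ 2 - x ^ 2| ≤ |x| + 1 := by
  have hjx : |(j : ℝ) - x| ≤ 1/2 := abs_le.2 ⟨by linarith [hx.2], by linarith [hx.1]⟩
  have hj : |(j : ℝ) + x| ≤ 2 * |x| + 1/2 := by
    calc |(j : ℝ) + x| = |((j : ℝ) - x) + 2 * x| := by ring_nf
      _ ≤ |(j : ℝ) - x| + |2 * x| := abs_add_le _ _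
      _ ≤ 2 * |x| + 1/2 := by rw [abs_mul, abs_two]; linarith
  calc |(j : ℝ) ^ 2 - x ^ 2| = |(j : ℝ) - x| * |(j : ℝ) + x| := by
        rw [← abs_mul]; ring_nf
    _ ≤ 1/2 * (2 * |x| + 1/2) := by gcongr
    _ ≤ |x| + 1 := by linarith

theorem abs_sq_mul_cellMass_sub_le (hF0 : ∀ x, 0 ≤ F x) (hF : Integrable F)
    (hF1 : Integrable fun x => |x| * F x) (hF2 : Integrable fun x => x ^ 2 * F x) (j : ℤ) :
    |(j : ℝ) ^ 2 * cellMass F j - cellMass (fun x => x ^ 2 * F x) j|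
      ≤ cellMass (fun x => |x| * F x + F x) j := by
  have hle : (j : ℝ) - 1/2 ≤ j + 1/2 := by linarith
  unfold cellMass
  rw [← intervalIntegral.integral_const_mul, ← integral_sub (hF.intervalIntegrable.const_mul _)
    hF2.intervalIntegrable]
  refine (abs_integral_le_integral_abs hle).trans (integral_mono_on hle ?_
    (hF1.intervalIntegrable.add hF.intervalIntegrable) fun x hx => ?_)
  · exact ((hF.intervalIntegrable.const_mul _).sub hF2.intervalIntegrable).abs
  · rw [← sub_mul, abs_mul, abs_of_nonneg (hF0 x), ← add_one_mul]
    exact mul_le_mul_of_nonneg_right (abs_sq_sub_sq_le_of_mem_cell hx) (hF0 x)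

end CellMass

theorem integrable_abs_mul_of_integrable_sq_mul {F : ℝ → ℝ} (hF0 : ∀ x, 0 ≤ F x)
    (hF : Integrable F) (hF2 : Integrable fun x => x ^ 2 * F x) :
    Integrable fun x => |x| * F x := by
  refine (hF.add hF2).mono' (continuous_abs.aestronglyMeasurable.mul hF.1)
    (ae_of_all _ fun x => ?_)
  have habs : |x| ≤ 1 + x ^ 2 := by nlinarith [sq_abs x, abs_nonneg x]
  rw [Real.norm_eq_abs, abs_of_nonneg (mul_nonneg (abs_nonneg x) (hF0 x)), Pi.add_apply,
    ← one_add_mul]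
  exact mul_le_mul_of_nonneg_right habs (hF0 x)

/-- With `s = α l / π`, `dilate s φ` is the paper's `φ_{αl}` recentred at `0`. -/
noncomputable def dilate (s : ℝ) (φ : ℝ → ℝ) (x : ℝ) : ℝ := s⁻¹ * φ (x / s)

section Dilate

variable {s : ℝ} {φ : ℝ → ℝ}

theorem mul_dilate (hs : s ≠ 0) (w : ℝ → ℝ) (x : ℝ) :
    w x * dilate s φ x = s⁻¹ * (w (s * (x / s)) * φ (x / s)) := by
  rw [dilate, mul_div_cancel₀ x hs]
  ring

theorem integrable_mul_dilate_iff (hs : s ≠ 0) (w : ℝ → ℝ) :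
    Integrable (fun x => w x * dilate s φ x) ↔ Integrable fun u => w (s * u) * φ u := by
  simp only [mul_dilate hs w]
  rw [integrable_const_mul_iff (isUnit_iff_ne_zero.2 (inv_ne_zero hs)),
    integrable_comp_div_iff (fun u => w (s * u) * φ u) hs]

theorem integral_mul_dilate (hs : 0 < s) (w : ℝ → ℝ) :
    ∫ x, w x * dilate s φ x = ∫ u, w (s * u) * φ u := by
  simp only [mul_dilate hs.ne' w]
  rw [MeasureTheory.integral_const_mul, Measure.integral_comp_div (fun u => w (s * u) * φ u),
    smul_eq_mul, abs_of_pos hs, inv_mul_cancel_left₀ hs.ne']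

theorem integrable_dilate (hs : s ≠ 0) (hφ : Integrable φ) : Integrable (dilate s φ) := by
  simpa only [one_mul] using (integrable_mul_dilate_iff hs fun _ => 1).2 (by simpa only [one_mul])

theorem integral_dilate (hs : 0 < s) : ∫ x, dilate s φ x = ∫ x, φ x := by
  simpa only [one_mul] using integral_mul_dilate hs (φ := φ) fun _ => 1

theorem dilate_neg (hφ : ∀ x, φ (-x) = φ x) (x : ℝ) : dilate s φ (-x) = dilate s φ x := by
  rw [dilate, dilate, neg_div, hφ]

theorem dilate_nonneg (hs : 0 < s) (hφ : ∀ x, 0 ≤ φ x) (x : ℝ) : 0 ≤ dilate s φ x :=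
  mul_nonneg (inv_nonneg.2 hs.le) (hφ _)

end Dilate

theorem summable_and_abs_tsum_sq_mul_cellMass_dilate_sub_le {s : ℝ} {φ : ℝ → ℝ} (hs : 0 < s)
    (hφ0 : ∀ x, 0 ≤ φ x) (hφ : Integrable φ) (hφ1 : ∫ x, φ x = 1)
    (hφ2 : Integrable fun x => x ^ 2 * φ x) :
    Summable (fun j : ℤ => (j : ℝ) ^ 2 * cellMass (dilate s φ) j) ∧
      |∑' j : ℤ, (j : ℝ) ^ 2 * cellMass (dilate s φ) j - s ^ 2 * ∫ x, x ^ 2 * φ x|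
        ≤ s * (∫ x, |x| * φ x) + 1 := by
  have hφabs := integrable_abs_mul_of_integrable_sq_mul hφ0 hφ hφ2
  have hF : Integrable (dilate s φ) := integrable_dilate hs.ne' hφ
  have hF1 : Integrable fun x => |x| * dilate s φ x := by
    refine (integrable_mul_dilate_iff hs.ne' _).2 ?_
    simpa only [abs_mul, abs_of_pos hs, mul_assoc] using hφabs.const_mul s
  have hF2 : Integrable fun x => x ^ 2 * dilate s φ x := by
    refine (integrable_mul_dilate_iff hs.ne' _).2 ?_
    simpa only [mul_pow, mul_assoc] using hφ2.const_mul (s ^ 2)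
  have hsecond : ∫ x, x ^ 2 * dilate s φ x = s ^ 2 * ∫ x, x ^ 2 * φ x := by
    rw [integral_mul_dilate hs, ← MeasureTheory.integral_const_mul]
    simp only [mul_pow, mul_assoc]
  have hfirst : ∫ x, (|x| * dilate s φ x + dilate s φ x) = s * (∫ x, |x| * φ x) + 1 := by
    rw [integral_add hF1 hF, integral_dilate hs, hφ1, integral_mul_dilate hs]
    simp only [abs_mul, abs_of_pos hs, mul_assoc]
    rw [MeasureTheory.integral_const_mul]
  have h2 := hasSum_cellMass hF2
  have h1 := hasSum_cellMass (F := fun x => |x| * dilate s φ x + dilate s φ x) (hF1.add hF)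
  rw [hsecond] at h2
  rw [hfirst] at h1
  exact summable_and_abs_tsum_sub_le h2 h1
    (abs_sq_mul_cellMass_sub_le (dilate_nonneg hs hφ0) hF hF1 hF2)

theorem tendsto_sqrt_tsum_sq_mul_cellMass_dilate_div {φ : ℝ → ℝ} (hφ0 : ∀ x, 0 ≤ φ x)
    (hφ : Integrable φ) (hφ1 : ∫ x, φ x = 1) (hφ2 : Integrable fun x => x ^ 2 * φ x) :
    Tendsto (fun s => √(∑' j : ℤ, (j : ℝ) ^ 2 * cellMass (dilate s φ) j) / s) atTop
      (𝓝 √(∫ x, x ^ 2 * φ x)) :=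
  tendsto_sqrt_div_of_abs_sub_sq_mul_le fun s hs => by
    simpa only [mul_comm s] using
      (summable_and_abs_tsum_sq_mul_cellMass_dilate_sub_le hs hφ0 hφ hφ1 hφ2).2

theorem tsum_mul_cellMass_dilate_sub {s : ℝ} {φ : ℝ → ℝ} (hs : 0 < s) (hφ0 : ∀ x, 0 ≤ φ x)
    (hφ : Integrable φ) (hφ1 : ∫ x, φ x = 1) (hφ2 : Integrable fun x => x ^ 2 * φ x)
    (hφeven : ∀ x, φ (-x) = φ x) (k₀ : ℤ) :
    ∑' k : ℤ, (k : ℝ) * cellMass (dilate s φ) (k - k₀) = k₀ := by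
  have hm1 : HasSum (cellMass (dilate s φ)) 1 := by
    simpa only [integral_dilate hs, hφ1] using hasSum_cellMass (integrable_dilate hs.ne' hφ)
  have hm2 := (summable_and_abs_tsum_sq_mul_cellMass_dilate_sub_le hs hφ0 hφ hφ1 hφ2).1
  exact tsum_mul_sub_eq_of_even hm1 (cellMass_neg (dilate_neg hφeven))
    (summable_mul_of_summable_sq_mul (cellMass_nonneg (dilate_nonneg hs hφ0)) hm1.summable hm2) k₀

theorem intervalIntegral_scaled_eq_cellMass_dilate {c α : ℝ} (hc : c ≠ 0) (hα : α ≠ 0)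
    (φ : ℝ → ℝ) (k₀ k : ℤ) :
    ∫ q in (k - 1/2 : ℝ)..(k + 1/2), α⁻¹ * (c * φ (c * ((q - k₀) / α)))
      = cellMass (dilate (α / c) φ) (k - k₀) := by
  have hpt : ∀ q : ℝ, α⁻¹ * (c * φ (c * ((q - k₀) / α))) = dilate (α / c) φ (q - k₀) := by
    intro q
    have harg : (q - k₀) / (α / c) = c * ((q - k₀) / α) := by field_simp
    rw [dilate, harg, inv_div]
    ring
  simp only [hpt]
  rw [intervalIntegral.integral_comp_sub_right, cellMass]
  congr 1 <;> push_cast <;> ring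

end DiscretizedPacket

open DiscretizedPacket

theorem discretized_packet_momentum_general
    (l ps hbar : ℝ) (hl : 0 < l) (hhbar : 0 < hbar)
    (φ : ℝ → ℝ) (hφ0 : ∀ q : ℝ, 0 ≤ φ q) (hφint : ∫ q : ℝ, φ q = 1)
    (hφ2 : MeasureTheory.Integrable (fun q : ℝ => q ^ 2 * φ q))
    (hφeven : ∀ q : ℝ, φ (-q) = φ q)
    (hΔq : 0 < ∫ q : ℝ, q ^ 2 * φ q)
    (kbar : ℤ) (hkbar : kbar = round (l * ps / (π * hbar)))
    (a : ℝ → ℤ → ℝ)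
    (ha : ∀ α : ℝ, 0 < α → ∀ k : ℤ, a α k =
      Real.sqrt (∫ q in ((k : ℝ) - 1/2)..((k : ℝ) + 1/2),
        α⁻¹ * (π / l * φ (π / l * ((q - (kbar : ℝ)) / α)))))
    (pbar : ℝ → ℝ)
    (hpbar : ∀ α : ℝ, 0 < α → pbar α = ∑' k : ℤ, (π / l * hbar * (k : ℝ)) * (a α k) ^ 2) :
    (∀ α : ℝ, 0 < α → pbar α = π / l * hbar * (kbar : ℝ)) ∧
    |π / l * hbar * (kbar : ℝ) - ps| ≤ π / l * hbar ∧
    ∃ c : ℝ, c ≠ 0 ∧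
      Tendsto (fun α : ℝ =>
          Real.sqrt (∑' k : ℤ, (π / l * hbar * (k : ℝ) - pbar α) ^ 2 * (a α k) ^ 2) / α)
        atTop (𝓝 c) := by
  have hc : 0 < π / l := div_pos pi_pos hl
  have hφ : Integrable φ := Integrable.of_integral_ne_zero (hφint ▸ one_ne_zero)
  have ha_sq : ∀ α, 0 < α → ∀ k, a α k ^ 2 = cellMass (dilate (α / (π / l)) φ) (k - kbar) :=
    fun α hα k => by
      rw [ha α hα k, Real.sq_sqrt, intervalIntegral_scaled_eq_cellMass_dilate hc.ne' hα.ne']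
      exact intervalIntegral.integral_nonneg (by linarith) fun q _ =>
        mul_nonneg (inv_nonneg.2 hα.le) (mul_nonneg hc.le (hφ0 _))
  have hmean : ∀ α, 0 < α → pbar α = π / l * hbar * kbar := fun α hα => by
    simp only [hpbar α hα, ha_sq α hα, mul_assoc]
    rw [tsum_mul_left, tsum_mul_left,
      tsum_mul_cellMass_dilate_sub (div_pos hα hc) hφ0 hφ hφint hφ2 hφeven]
  refine ⟨hmean, ?_, hbar * √(∫ q, q ^ 2 * φ q), by positivity, ?_⟩
  · have hk : |l * ps / (π * hbar) - kbar| ≤ 1 / 2 := hkbar ▸ abs_sub_round _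
    have hdiff : π / l * hbar * kbar - ps = π / l * hbar * (kbar - l * ps / (π * hbar)) := by
      field_simp
    rw [hdiff, abs_mul, abs_of_pos (by positivity), abs_sub_comm]
    nlinarith [mul_le_mul_of_nonneg_left hk (by positivity : (0 : ℝ) ≤ π / l * hbar)]
  · refine (((tendsto_sqrt_tsum_sq_mul_cellMass_dilate_div hφ0 hφ hφint hφ2).comp
      (tendsto_id.atTop_div_const hc)).const_mul hbar).congr' ?_
    filter_upwards [eventually_gt_atTop 0] with α hα
    simp only [Function.comp_apply, id, hmean α hα, ha_sq α hα, tsum_sq_mul_sub,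
      Real.sqrt_mul (sq_nonneg _), Real.sqrt_sq (by positivity : (0 : ℝ) ≤ π / l * hbar)]
    field_simp

/-- For the wave packets obtained by discretizing an even, unimodal
momentum density `φ` with nonzero second moment: the mean momentum equals `(π/l)ħ·k̄`
for every `α > 0` (so `|p̄_α - p*| ≤ (π/l)ħ`), and `Δ*p_α/α` tends to a nonzero constant
as `α → ∞`. -/
theorem discretized_packet_momentum
    (l xs ps hbar : ℝ) (hl : 0 < l) (hxs : xs ∈ Set.Ioo (-l) l) (hhbar : 0 < hbar)
    (φ : ℝ → ℝ) (hφ0 : ∀ q : ℝ, 0 ≤ φ q) (hφint : ∫ q : ℝ, φ q = 1)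
    (hφmean : ∫ q : ℝ, q * φ q = 0)
    (hφ2 : MeasureTheory.Integrable (fun q : ℝ => q ^ 2 * φ q))
    (hφeven : ∀ q : ℝ, φ (-q) = φ q)
    (hφmax : ∀ q : ℝ, φ q ≤ φ 0)
    (hφmono : ∀ q q' : ℝ, |q| ≤ |q'| → φ q' ≤ φ q)
    (hΔq : 0 < ∫ q : ℝ, q ^ 2 * φ q)
    (kbar : ℤ) (hkbar : kbar = round (l * ps / (π * hbar)))
    (a : ℝ → ℤ → ℝ)
    (ha : ∀ α : ℝ, 0 < α → ∀ k : ℤ, a α k =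
      Real.sqrt (∫ q in ((k : ℝ) - 1/2)..((k : ℝ) + 1/2),
        α⁻¹ * (π / l * φ (π / l * ((q - (kbar : ℝ)) / α)))))
    (pbar : ℝ → ℝ)
    (hpbar : ∀ α : ℝ, 0 < α → pbar α = ∑' k : ℤ, (π / l * hbar * (k : ℝ)) * (a α k) ^ 2) :
    (∀ α : ℝ, 0 < α → pbar α = π / l * hbar * (kbar : ℝ)) ∧
    |π / l * hbar * (kbar : ℝ) - ps| ≤ π / l * hbar ∧
    ∃ c : ℝ, c ≠ 0 ∧
      Tendsto (fun α : ℝ =>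
          Real.sqrt (∑' k : ℤ, (π / l * hbar * (k : ℝ) - pbar α) ^ 2 * (a α k) ^ 2) / α)
        atTop (𝓝 c) :=
  discretized_packet_momentum_general l ps hbar hl hhbar φ hφ0 hφint hφ2 hφeven hΔq kbar hkbar a ha
    pbar hpbar
end

section
/- Let l > 0, ħ > 0, and let φ be an even probability density on ℝ, attaining its maximum at 0 and nonincreasing in |q|, with zero mean and finite second moment Δq². With the discretized coefficients a_k^{(α)} as below, the mean momentum equals p̄_α = (π/l)ħ·k̄ for every α > 0, and the momentum moment satisfies for every α > 0: −(1/12)((π/l)ħ)²·(1 + (2/α)·φ_l(0)) ≤ Δ*p_α² − (αħΔq)² ≤ (1/6)((π/l)ħ)²·(1 + (2/α)·φ_l(0)). -/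
open Real MeasureTheory

/-!
After rescaling, `a_k² = β (k - k̄)` where `β m = ∫_{m-1/2}^{m+1/2} g` are the cell masses of the
even density `g s = c φ (c s)`, `c = π / (l α)`; evenness of `β` gives the mean `k̄`. For the second
moment, `Σ m² β m - ∫ s² g = ∫ (round s ² - s²) g s`, and with `s = m + t`, `|t| ≤ 1/2`, this is
`∫_{-1/2}^{1/2} Σ_m (-2 m t - t²) g (m + t) dt`, an even function of `t`. For `0 ≤ t ≤ 1/2`,
radial monotonicity and summation by parts give `0 ≤ -Σ_m m g (m + t) ≤ Σ_{j ≥ 1} g (j - t)`,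
and sums of `g` over a shifted lattice `t + ℕ` are at most `C = g 0 + ∫_0^∞ g = g 0 + 1/2`.
Hence `-2 t² C ≤ Σ_m (-2 m t - t²) g (m + t) ≤ 2 (t - t²) C`, which integrate to `-C/6`, `C/3`.
-/

def IsRadiallyNonincreasing (g : ℝ → ℝ) : Prop :=
  ∀ s s' : ℝ, |s| ≤ |s'| → g s' ≤ g s

namespace IsRadiallyNonincreasing

variable {g : ℝ → ℝ}

theorem even (hg : IsRadiallyNonincreasing g) (s : ℝ) : g (-s) = g s :=
  le_antisymm (hg s (-s) (abs_neg s).ge) (hg (-s) s (abs_neg s).le)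

theorem le_apply_zero (hg : IsRadiallyNonincreasing g) (s : ℝ) : g s ≤ g 0 :=
  hg 0 s (by simp)

theorem apply_le_apply (hg : IsRadiallyNonincreasing g) {s s' : ℝ} (hs : 0 ≤ s) (hss' : s ≤ s') :
    g s' ≤ g s :=
  hg s s' (by rwa [abs_of_nonneg hs, abs_of_nonneg (hs.trans hss')])

theorem antitoneOn (hg : IsRadiallyNonincreasing g) : AntitoneOn g (Set.Ici 0) :=
  fun _ ha _ _ hab => hg.apply_le_apply ha hab

theorem const_mul_comp_mul (hg : IsRadiallyNonincreasing g) {c : ℝ} (hc : 0 ≤ c) (b : ℝ) :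
    IsRadiallyNonincreasing fun s => c * g (b * s) := fun _ _ hss' =>
  mul_le_mul_of_nonneg_left (hg _ _ (by rw [abs_mul, abs_mul]; gcongr)) hc

theorem sum_range_le_setIntegral_Ioi (hg : IsRadiallyNonincreasing g) (hg0 : ∀ s, 0 ≤ g s)
    (hint : IntegrableOn g (Set.Ioi 0)) {t : ℝ} (ht : 0 ≤ t) (M : ℕ) :
    ∑ j ∈ Finset.range M, g (t + (j + 1 : ℕ)) ≤ ∫ s in Set.Ioi 0, g s := by
  refine (hg.antitoneOn.mono fun s hs => ht.trans hs.1 : AntitoneOn g _).sum_le_integral.trans ?_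
  rw [intervalIntegral.integral_of_le (le_add_of_nonneg_right M.cast_nonneg)]
  exact setIntegral_mono_set hint (ae_of_all _ fun s => hg0 s)
    (Set.Ioc_subset_Ioi_self.trans (Set.Ioi_subset_Ioi ht)).eventuallyLE

theorem sum_range_le_add_setIntegral_Ioi (hg : IsRadiallyNonincreasing g) (hg0 : ∀ s, 0 ≤ g s)
    (hint : IntegrableOn g (Set.Ioi 0)) {t : ℝ} (ht : 0 ≤ t) (M : ℕ) :
    ∑ j ∈ Finset.range M, g (t + j) ≤ g 0 + ∫ s in Set.Ioi 0, g s := by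
  have hI : 0 ≤ ∫ s in Set.Ioi 0, g s := setIntegral_nonneg measurableSet_Ioi fun s _ => hg0 s
  rcases M with _ | N
  · simpa using add_nonneg (hg0 0) hI
  · rw [Finset.sum_range_succ']
    linarith [hg.sum_range_le_setIntegral_Ioi hg0 hint ht N, hg.le_apply_zero (t + (0 : ℕ))]

end IsRadiallyNonincreasing

section Interlaced

variable {x y : ℕ → ℝ}

theorem sum_range_le_add_sum_range_of_succ_le (hx : ∀ j, 0 ≤ x j) (hxy : ∀ j, x (j + 1) ≤ y j)
    (M : ℕ) : ∑ j ∈ Finset.range M, x j ≤ x 0 + ∑ j ∈ Finset.range M, y j := by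
  have : ∑ j ∈ Finset.range M, (x j - y j) ≤ ∑ j ∈ Finset.range M, (x j - x (j + 1)) :=
    Finset.sum_le_sum fun j _ => by linarith [hxy j]
  rw [Finset.sum_range_sub', Finset.sum_sub_distrib] at this
  linarith [hx M]

theorem sum_range_succ_mul_sub_le (hx : ∀ j, 0 ≤ x j) (hxy : ∀ j, x (j + 1) ≤ y j) (M : ℕ) :
    ∑ j ∈ Finset.range M, ((j : ℝ) + 1) * (x j - y j) ≤ ∑ j ∈ Finset.range M, x j := by
  -- summation by parts: `(j + 1) (x j - x (j + 1)) = x j + (j x j - (j + 1) x (j + 1))`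
  calc ∑ j ∈ Finset.range M, ((j : ℝ) + 1) * (x j - y j)
      ≤ ∑ j ∈ Finset.range M, (x j + ((j : ℕ) * x j - ((j + 1 : ℕ) : ℝ) * x (j + 1))) :=
        Finset.sum_le_sum fun j _ => by
          push_cast; nlinarith [hxy j, (j.cast_nonneg : (0 : ℝ) ≤ j)]
    _ = ∑ j ∈ Finset.range M, x j - M * x M := by
        rw [Finset.sum_add_distrib, Finset.sum_range_sub']; simp [sub_eq_add_neg]
    _ ≤ ∑ j ∈ Finset.range M, x j := by nlinarith [hx M, (M.cast_nonneg : (0 : ℝ) ≤ M)]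

end Interlaced

theorem Finset.sum_Icc_neg_natCast_self {M : Type*} [AddCommMonoid M] (h : ℤ → M) (N : ℕ) :
    ∑ m ∈ Finset.Icc (-(N : ℤ)) N, h m
      = h 0 + ∑ j ∈ Finset.range N, (h (j + 1) + h (-(j + 1))) := by
  induction N with
  | zero => simp
  | succ N ih =>
    have hIcc : Finset.Icc (-((N + 1 : ℕ) : ℤ)) (N + 1 : ℕ)
        = insert (-((N : ℤ) + 1)) (insert ((N : ℤ) + 1) (Finset.Icc (-(N : ℤ)) N)) := by
      ext m; simp only [Finset.mem_Icc, Finset.mem_insert]; omega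
    rw [hIcc, Finset.sum_insert (by simp; omega), Finset.sum_insert (by simp), ih,
      Finset.sum_range_succ]
    abel

theorem intervalIntegral_neg_self_eq_two_mul_of_even {f : ℝ → ℝ} {a : ℝ}
    (heven : ∀ x, f (-x) = f x) (h₁ : IntervalIntegrable f volume (-a) 0)
    (h₂ : IntervalIntegrable f volume 0 a) : ∫ x in -a..a, f x = 2 * ∫ x in 0..a, f x := by
  have h := intervalIntegral.integral_comp_neg (a := 0) (b := a) f
  simp only [heven, neg_zero] at h
  rw [← intervalIntegral.integral_add_adjacent_intervals h₁ h₂, two_mul, h]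

theorem setIntegral_Ioi_eq_integral_div_two_of_even {g : ℝ → ℝ} (heven : ∀ s, g (-s) = g s)
    (hint : Integrable g) : ∫ s in Set.Ioi 0, g s = (∫ s, g s) / 2 := by
  have h := integral_comp_neg_Ioi 0 g
  simp only [heven, neg_zero] at h
  have := integral_add_compl (measurableSet_Iic (a := (0 : ℝ))) hint
  rw [Set.compl_Iic, ← h] at this
  linarith

-- For `|t| < 1/2` the integer nearest to `m + t` is `m`, so this is `Σ (round s ^ 2 - s ^ 2) g s`
-- over the points `s = m + t`, `|m| ≤ N`.
noncomputable def periodizedDefect (g : ℝ → ℝ) (N : ℕ) (t : ℝ) : ℝ :=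
  ∑ m ∈ Finset.Icc (-(N : ℤ)) N, ((m : ℝ) ^ 2 - (m + t) ^ 2) * g (m + t)

section periodizedDefect

variable {g : ℝ → ℝ}

theorem periodizedDefect_neg (heven : ∀ s, g (-s) = g s) (N : ℕ) (t : ℝ) :
    periodizedDefect g N (-t) = periodizedDefect g N t := by
  refine Finset.sum_equiv (Equiv.neg ℤ) (fun m => by simp [neg_le, and_comm]) fun m _ => ?_
  rw [Equiv.neg_apply, Int.cast_neg, ← heven (-m + t)]
  ring_nf

theorem periodizedDefect_eq (heven : ∀ s, g (-s) = g s) (N : ℕ) (t : ℝ) :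
    periodizedDefect g N t
      = 2 * t * ∑ j ∈ Finset.range N, ((j : ℝ) + 1) * (g (j + 1 - t) - g (j + 1 + t))
        - t ^ 2 * (g t + ∑ j ∈ Finset.range N, g (j + 1 - t)
          + ∑ j ∈ Finset.range N, g (j + 1 + t)) := by
  rw [periodizedDefect, Finset.sum_Icc_neg_natCast_self]
  calc _ = -t ^ 2 * g t + ∑ j ∈ Finset.range N, (2 * t * (((j : ℝ) + 1) * (g (j + 1 - t)
          - g (j + 1 + t))) - t ^ 2 * g (j + 1 - t) - t ^ 2 * g (j + 1 + t)) := by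
        refine congrArg₂ (· + ·) (by simp) (Finset.sum_congr rfl fun j _ => ?_)
        rw [← heven (j + 1 - t)]
        push_cast
        ring_nf
    _ = _ := by
        rw [Finset.sum_sub_distrib, Finset.sum_sub_distrib, ← Finset.mul_sum, ← Finset.mul_sum,
          ← Finset.mul_sum]
        ring

theorem IsRadiallyNonincreasing.periodizedDefect_bounds (hg : IsRadiallyNonincreasing g)
    (hg0 : ∀ s, 0 ≤ g s) (hint : IntegrableOn g (Set.Ioi 0)) {t : ℝ} (ht0 : 0 ≤ t)
    (ht1 : t ≤ 1 / 2) (N : ℕ) :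
    -2 * t ^ 2 * (g 0 + ∫ s in Set.Ioi 0, g s) ≤ periodizedDefect g N t ∧
      periodizedDefect g N t ≤ 2 * (t - t ^ 2) * (g 0 + ∫ s in Set.Ioi 0, g s) := by
  set C := g 0 + ∫ s in Set.Ioi 0, g s
  set x : ℕ → ℝ := fun j => g (j + 1 - t)
  set y : ℕ → ℝ := fun j => g (j + 1 + t)
  have hx0 : ∀ j, 0 ≤ x j := fun j => hg0 _
  have hyx : ∀ j, y j ≤ x j := fun j =>
    hg.apply_le_apply (by linarith [j.cast_nonneg (α := ℝ)]) (by linarith)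
  have hxy : ∀ j, x (j + 1) ≤ y j := fun j =>
    hg.apply_le_apply (by linarith [j.cast_nonneg (α := ℝ)]) (by push_cast; linarith)
  have hW0 : 0 ≤ ∑ j ∈ Finset.range N, ((j : ℝ) + 1) * (x j - y j) :=
    Finset.sum_nonneg fun j _ => mul_nonneg (by positivity) (sub_nonneg.2 (hyx j))
  have hWx := sum_range_succ_mul_sub_le hx0 hxy N
  have hxgy : ∑ j ∈ Finset.range N, x j ≤ g t + ∑ j ∈ Finset.range N, y j :=
    (sum_range_le_add_sum_range_of_succ_le hx0 hxy N).trans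
      (by gcongr; exact hg.apply_le_apply ht0 (by simp; linarith))
  have hSx : ∑ j ∈ Finset.range N, x j ≤ C := by
    simpa [x, sub_add_eq_add_sub, add_comm, add_sub_assoc]
      using hg.sum_range_le_add_setIntegral_Ioi hg0 hint (t := 1 - t) (by linarith) N
  have hSy : ∑ j ∈ Finset.range N, y j ≤ ∫ s in Set.Ioi 0, g s := by
    simpa [y, add_comm, add_left_comm] using hg.sum_range_le_setIntegral_Ioi hg0 hint ht0 N
  have hgt : g t ≤ g 0 := hg.le_apply_zero t
  have ht2 : 0 ≤ t ^ 2 := sq_nonneg t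
  have htt : 0 ≤ t - t ^ 2 := by nlinarith
  rw [periodizedDefect_eq hg.even]
  constructor
  · nlinarith [mul_le_mul_of_nonneg_left (add_le_add (add_le_add hgt hSx) hSy) ht2]
  · nlinarith [mul_le_mul_of_nonneg_left hxgy ht2, mul_le_mul_of_nonneg_left hSx htt]

theorem integrable_sq_sub_sq_mul_comp_add (hg : Integrable g)
    (hg2 : Integrable fun s => s ^ 2 * g s) (m : ℤ) :
    Integrable fun t => ((m : ℝ) ^ 2 - (m + t) ^ 2) * g (m + t) := by
  have hm : Integrable fun s => ((m : ℝ) ^ 2 - s ^ 2) * g s :=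
    ((hg.const_mul ((m : ℝ) ^ 2)).sub hg2).congr
      (ae_of_all _ fun s => by simp only [Pi.sub_apply]; ring)
  exact hm.comp_add_left (m : ℝ)

theorem integrable_periodizedDefect (hg : Integrable g) (hg2 : Integrable fun s => s ^ 2 * g s)
    (N : ℕ) : Integrable (periodizedDefect g N) :=
  integrable_finsetSum _ fun m _ => integrable_sq_sub_sq_mul_comp_add hg hg2 m

end periodizedDefect

noncomputable def cellIntegral (f : ℝ → ℝ) (m : ℤ) : ℝ :=
  ∫ s in (m - 1 / 2 : ℝ)..(m + 1 / 2), f s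

section cellIntegral

variable {f g : ℝ → ℝ}

theorem hasSum_cellIntegral (hf : Integrable f) : HasSum (cellIntegral f) (∫ s, f s) := by
  have hcells : cellIntegral f = fun m : ℤ => ∫ s in -1 / 2 + m..-1 / 2 + m + 1, f s := by
    funext m
    rw [cellIntegral]
    congr 1 <;> ring
  exact hcells ▸ hf.hasSum_intervalIntegral _

theorem cellIntegral_nonneg (hf : ∀ s, 0 ≤ f s) (m : ℤ) : 0 ≤ cellIntegral f m :=
  intervalIntegral.integral_nonneg (by linarith) fun s _ => hf s

theorem cellIntegral_neg (heven : ∀ s, f (-s) = f s) (m : ℤ) :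
    cellIntegral f (-m) = cellIntegral f m := by
  have h := intervalIntegral.integral_comp_neg (a := (m : ℝ) - 1 / 2) (b := m + 1 / 2) f
  simp only [heven] at h
  rw [cellIntegral, cellIntegral, h]
  push_cast
  congr 1 <;> ring

theorem cellIntegral_sub (f : ℝ → ℝ) (k k₀ : ℤ) :
    cellIntegral f (k - k₀) = ∫ q in (k - 1 / 2 : ℝ)..(k + 1 / 2), f (q - k₀) := by
  rw [intervalIntegral.integral_comp_sub_right, cellIntegral]
  push_cast
  ring_nf

theorem sq_mul_cellIntegral_sub_cellIntegral_sq_mul (hg : Integrable g)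
    (hg2 : Integrable fun s => s ^ 2 * g s) (m : ℤ) :
    (m : ℝ) ^ 2 * cellIntegral g m - cellIntegral (fun s => s ^ 2 * g s) m
      = ∫ t in (-1 / 2 : ℝ)..(1 / 2), ((m : ℝ) ^ 2 - (m + t) ^ 2) * g (m + t) := by
  rw [cellIntegral, cellIntegral, ← intervalIntegral.integral_const_mul,
    ← intervalIntegral.integral_sub ((hg.const_mul _).intervalIntegrable) hg2.intervalIntegrable,
    intervalIntegral.integral_comp_add_left (fun s => ((m : ℝ) ^ 2 - s ^ 2) * g s)]
  simp only [sub_mul]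
  congr 1
  ring

theorem sq_mul_cellIntegral_le (hg0 : ∀ s, 0 ≤ g s) (hg : Integrable g)
    (hg2 : Integrable fun s => s ^ 2 * g s) (m : ℤ) :
    (m : ℝ) ^ 2 * cellIntegral g m
      ≤ 2 * cellIntegral (fun s => s ^ 2 * g s) m + cellIntegral g m / 2 := by
  rw [cellIntegral, cellIntegral, ← intervalIntegral.integral_const_mul,
    ← intervalIntegral.integral_const_mul, ← intervalIntegral.integral_div,
    ← intervalIntegral.integral_add (hg2.const_mul _).intervalIntegrable
      (hg.div_const _).intervalIntegrable]
  refine intervalIntegral.integral_mono_on (by linarith) (hg.const_mul _).intervalIntegrable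
    ((hg2.const_mul _).add (hg.div_const _)).intervalIntegrable fun s hs => ?_
  have : (m : ℝ) ^ 2 ≤ 2 * s ^ 2 + 1 / 2 := by nlinarith [hs.1, hs.2, sq_nonneg (2 * s - m)]
  nlinarith [mul_le_mul_of_nonneg_right this (hg0 s)]

theorem summable_sq_mul_cellIntegral (hg0 : ∀ s, 0 ≤ g s) (hg : Integrable g)
    (hg2 : Integrable fun s => s ^ 2 * g s) :
    Summable fun m : ℤ => (m : ℝ) ^ 2 * cellIntegral g m :=
  Summable.of_nonneg_of_le (fun m => mul_nonneg (sq_nonneg _) (cellIntegral_nonneg hg0 m))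
    (sq_mul_cellIntegral_le hg0 hg hg2)
    (((hasSum_cellIntegral hg2).mul_left 2).add ((hasSum_cellIntegral hg).div_const 2)).summable

theorem summable_mul_cellIntegral (hg0 : ∀ s, 0 ≤ g s) (hg : Integrable g)
    (hg2 : Integrable fun s => s ^ 2 * g s) :
    Summable fun m : ℤ => (m : ℝ) * cellIntegral g m := by
  refine ((summable_sq_mul_cellIntegral hg0 hg hg2).add
    (hasSum_cellIntegral hg).summable).of_norm_bounded fun m => ?_
  have hm : |(m : ℝ)| ≤ (m : ℝ) ^ 2 + 1 := by
    nlinarith [sq_abs (m : ℝ), sq_nonneg (|(m : ℝ)| - 1)]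
  rw [Real.norm_eq_abs, abs_mul, abs_of_nonneg (cellIntegral_nonneg hg0 m)]
  nlinarith [cellIntegral_nonneg hg0 m]

theorem sum_Icc_sq_mul_cellIntegral_sub_eq_integral_periodizedDefect (hg : Integrable g)
    (hg2 : Integrable fun s => s ^ 2 * g s) (N : ℕ) :
    ∑ m ∈ Finset.Icc (-(N : ℤ)) N,
        ((m : ℝ) ^ 2 * cellIntegral g m - cellIntegral (fun s => s ^ 2 * g s) m)
      = ∫ t in (-1 / 2 : ℝ)..(1 / 2), periodizedDefect g N t := by
  simp only [sq_mul_cellIntegral_sub_cellIntegral_sq_mul hg hg2, periodizedDefect]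
  exact (intervalIntegral.integral_finsetSum fun m _ =>
    (integrable_sq_sub_sq_mul_comp_add hg hg2 m).intervalIntegrable).symm

theorem IsRadiallyNonincreasing.sum_Icc_sq_mul_cellIntegral_sub_bounds
    (hg : IsRadiallyNonincreasing g) (hg0 : ∀ s, 0 ≤ g s) (hint : Integrable g)
    (hone : ∫ s, g s = 1) (hg2 : Integrable fun s => s ^ 2 * g s) (N : ℕ) :
    -(1 / 12) * (1 + 2 * g 0) ≤ ∑ m ∈ Finset.Icc (-(N : ℤ)) N,
        ((m : ℝ) ^ 2 * cellIntegral g m - cellIntegral (fun s => s ^ 2 * g s) m) ∧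
      ∑ m ∈ Finset.Icc (-(N : ℤ)) N,
        ((m : ℝ) ^ 2 * cellIntegral g m - cellIntegral (fun s => s ^ 2 * g s) m)
        ≤ 1 / 6 * (1 + 2 * g 0) := by
  have hΦ := integrable_periodizedDefect hint hg2 N
  have hbounds := fun t (ht : t ∈ Set.Icc (0 : ℝ) (1 / 2)) =>
    hg.periodizedDefect_bounds hg0 hint.integrableOn ht.1 ht.2 N
  rw [setIntegral_Ioi_eq_integral_div_two_of_even hg.even hint, hone] at hbounds
  have hlo : ∫ t in (0 : ℝ)..1 / 2, -2 * t ^ 2 * (g 0 + 1 / 2)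
      ≤ ∫ t in (0 : ℝ)..1 / 2, periodizedDefect g N t :=
    intervalIntegral.integral_mono_on (by norm_num)
      (Continuous.intervalIntegrable (by fun_prop) _ _) hΦ.intervalIntegrable
      fun t ht => (hbounds t ht).1
  have hhi : ∫ t in (0 : ℝ)..1 / 2, periodizedDefect g N t
      ≤ ∫ t in (0 : ℝ)..1 / 2, 2 * (t - t ^ 2) * (g 0 + 1 / 2) :=
    intervalIntegral.integral_mono_on (by norm_num) hΦ.intervalIntegrable
      (Continuous.intervalIntegrable (by fun_prop) _ _) fun t ht => (hbounds t ht).2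
  rw [sum_Icc_sq_mul_cellIntegral_sub_eq_integral_periodizedDefect hint hg2,
    show (-1 / 2 : ℝ) = -(1 / 2) by ring,
    intervalIntegral_neg_self_eq_two_mul_of_even (periodizedDefect_neg hg.even N)
      hΦ.intervalIntegrable hΦ.intervalIntegrable]
  norm_num [integral_pow, integral_id, intervalIntegral.integral_const_mul,
    intervalIntegral.integral_mul_const] at hlo hhi
  constructor <;> linarith

theorem IsRadiallyNonincreasing.tsum_sq_mul_cellIntegral_sub_bounds
    (hg : IsRadiallyNonincreasing g) (hg0 : ∀ s, 0 ≤ g s) (hint : Integrable g)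
    (hone : ∫ s, g s = 1) (hg2 : Integrable fun s => s ^ 2 * g s) :
    -(1 / 12) * (1 + 2 * g 0) ≤ ∑' m : ℤ, (m : ℝ) ^ 2 * cellIntegral g m - ∫ s, s ^ 2 * g s ∧
      ∑' m : ℤ, (m : ℝ) ^ 2 * cellIntegral g m - ∫ s, s ^ 2 * g s ≤ 1 / 6 * (1 + 2 * g 0) := by
  have hsum := (summable_sq_mul_cellIntegral hg0 hint hg2).hasSum.sub (hasSum_cellIntegral hg2)
  have hlim := hsum.comp Finset.tendsto_Icc_neg
  have hN := hg.sum_Icc_sq_mul_cellIntegral_sub_bounds hg0 hint hone hg2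
  exact ⟨ge_of_tendsto' hlim fun N => (hN N).1, le_of_tendsto' hlim fun N => (hN N).2⟩

end cellIntegral

section shift

variable {p : ℤ → ℝ}

theorem tsum_mul_eq_zero_of_even (heven : ∀ m, p (-m) = p m) : ∑' m : ℤ, (m : ℝ) * p m = 0 := by
  have h := (Equiv.neg ℤ).tsum_eq fun m => (m : ℝ) * p m
  simp only [Equiv.neg_apply, Int.cast_neg, heven, neg_mul, tsum_neg] at h
  linarith

theorem tsum_mul_comp_sub_eq (hp : HasSum p 1) (hp1 : Summable fun m : ℤ => (m : ℝ) * p m)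
    (heven : ∀ m, p (-m) = p m) (k₀ : ℤ) : ∑' k : ℤ, (k : ℝ) * p (k - k₀) = k₀ := by
  rw [← (Equiv.addRight k₀).tsum_eq]
  simp only [Equiv.coe_addRight, add_sub_cancel_right, Int.cast_add, add_mul]
  rw [hp1.tsum_add (hp.summable.mul_left _), tsum_mul_left, hp.tsum_eq,
    tsum_mul_eq_zero_of_even heven]
  ring

theorem tsum_sub_sq_mul_comp_sub (k₀ : ℤ) :
    ∑' k : ℤ, ((k : ℝ) - k₀) ^ 2 * p (k - k₀) = ∑' m : ℤ, (m : ℝ) ^ 2 * p m := by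
  rw [← (Equiv.addRight k₀).tsum_eq]
  simp

end shift

theorem IsRadiallyNonincreasing.cellIntegral_moments {g : ℝ → ℝ} (hg : IsRadiallyNonincreasing g)
    (hg0 : ∀ s, 0 ≤ g s) (hint : Integrable g) (hone : ∫ s, g s = 1)
    (hg2 : Integrable fun s => s ^ 2 * g s) (k₀ : ℤ) :
    ∑' k : ℤ, (k : ℝ) * cellIntegral g (k - k₀) = k₀ ∧
      -(1 / 12) * (1 + 2 * g 0)
        ≤ ∑' k : ℤ, ((k : ℝ) - k₀) ^ 2 * cellIntegral g (k - k₀) - ∫ s, s ^ 2 * g s ∧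
      ∑' k : ℤ, ((k : ℝ) - k₀) ^ 2 * cellIntegral g (k - k₀) - ∫ s, s ^ 2 * g s
        ≤ 1 / 6 * (1 + 2 * g 0) := by
  rw [tsum_sub_sq_mul_comp_sub]
  exact ⟨tsum_mul_comp_sub_eq (hone ▸ hasSum_cellIntegral hint)
    (summable_mul_cellIntegral hg0 hint hg2) (cellIntegral_neg hg.even) k₀,
    hg.tsum_sq_mul_cellIntegral_sub_bounds hg0 hint hone hg2⟩

section rescale

variable {φ : ℝ → ℝ} {c : ℝ}

theorem integral_const_mul_comp_mul (hc : 0 < c) : ∫ s, c * φ (c * s) = ∫ q, φ q := by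
  rw [integral_const_mul, Measure.integral_comp_mul_left, abs_of_pos (inv_pos.2 hc), smul_eq_mul,
    mul_inv_cancel_left₀ hc.ne']

theorem sq_mul_const_mul_comp_mul_eq (hc : c ≠ 0) :
    (fun s => s ^ 2 * (c * φ (c * s))) = fun s => c⁻¹ * ((c * s) ^ 2 * φ (c * s)) :=
  funext fun s => by field_simp

theorem MeasureTheory.Integrable.sq_mul_const_mul_comp_mul
    (hφ2 : Integrable fun q => q ^ 2 * φ q) (hc : c ≠ 0) :
    Integrable fun s => s ^ 2 * (c * φ (c * s)) :=
  sq_mul_const_mul_comp_mul_eq hc ▸ (hφ2.comp_mul_left' hc).const_mul _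

theorem integral_sq_mul_const_mul_comp_mul (hc : 0 < c) :
    ∫ s, s ^ 2 * (c * φ (c * s)) = (∫ q, q ^ 2 * φ q) / c ^ 2 := by
  rw [sq_mul_const_mul_comp_mul_eq hc.ne', integral_const_mul,
    Measure.integral_comp_mul_left (fun q => q ^ 2 * φ q), abs_of_pos (inv_pos.2 hc), smul_eq_mul]
  field_simp

end rescale

theorem discretized_packet_momentum_moment_bounds_general
    (l hbar : ℝ) (hl : 0 < l)
    (φ : ℝ → ℝ) (hφ0 : ∀ q : ℝ, 0 ≤ φ q) (hφint : ∫ q : ℝ, φ q = 1)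
    (hφ2 : MeasureTheory.Integrable (fun q : ℝ => q ^ 2 * φ q))
    (hφmono : ∀ q q' : ℝ, |q| ≤ |q'| → φ q' ≤ φ q)
    (kbar : ℤ)
    (a : ℝ → ℤ → ℝ)
    (ha : ∀ α : ℝ, 0 < α → ∀ k : ℤ, a α k =
      Real.sqrt (∫ q in ((k : ℝ) - 1/2)..((k : ℝ) + 1/2),
        α⁻¹ * (π / l * φ (π / l * ((q - (kbar : ℝ)) / α)))))
    (pbar : ℝ → ℝ)
    (hpbar : ∀ α : ℝ, 0 < α → pbar α = ∑' k : ℤ, (π / l * hbar * (k : ℝ)) * (a α k) ^ 2)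
    (Δp2 : ℝ → ℝ)
    (hΔp2 : ∀ α : ℝ, 0 < α →
      Δp2 α = ∑' k : ℤ, (π / l * hbar * (k : ℝ) - π / l * hbar * (kbar : ℝ)) ^ 2 * (a α k) ^ 2) :
    ∀ α : ℝ, 0 < α →
      pbar α = π / l * hbar * (kbar : ℝ) ∧
      -(1 / 12) * (π / l * hbar) ^ 2 * (1 + 2 / α * (π / l * φ 0)) ≤
        Δp2 α - (α * hbar) ^ 2 * (∫ q : ℝ, q ^ 2 * φ q) ∧
      Δp2 α - (α * hbar) ^ 2 * (∫ q : ℝ, q ^ 2 * φ q) ≤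
        1 / 6 * (π / l * hbar) ^ 2 * (1 + 2 / α * (π / l * φ 0)) := by
  intro α hα
  set c := π / l / α
  have hc : 0 < c := by positivity
  set g : ℝ → ℝ := fun s => c * φ (c * s)
  have hg0 : ∀ s, 0 ≤ g s := fun s => mul_nonneg hc.le (hφ0 _)
  have hφi : Integrable φ := Integrable.of_integral_ne_zero (by rw [hφint]; exact one_ne_zero)
  have hg : IsRadiallyNonincreasing g := IsRadiallyNonincreasing.const_mul_comp_mul hφmono hc.le c
  obtain ⟨hmean, hlo, hhi⟩ := hg.cellIntegral_moments hg0
    ((hφi.comp_mul_left' hc.ne').const_mul c) (by rw [integral_const_mul_comp_mul hc, hφint])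
    (hφ2.sq_mul_const_mul_comp_mul hc.ne') kbar
  have hak : ∀ k : ℤ, a α k ^ 2 = cellIntegral g (k - kbar) := fun k => by
    have hintegrand : (fun q : ℝ => α⁻¹ * (π / l * φ (π / l * ((q - kbar) / α))))
        = fun q => g (q - kbar) := funext fun q => by simp only [g, c]; ring_nf
    rw [ha α hα k, hintegrand, ← cellIntegral_sub, Real.sq_sqrt (cellIntegral_nonneg hg0 _)]
  have hΔp2' : Δp2 α = (π / l * hbar) ^ 2
      * ∑' k : ℤ, ((k : ℝ) - kbar) ^ 2 * cellIntegral g (k - kbar) := by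
    rw [hΔp2 α hα, ← tsum_mul_left]
    exact tsum_congr fun k => by rw [hak]; ring
  have hmoment : (α * hbar) ^ 2 * ∫ q, q ^ 2 * φ q = (π / l * hbar) ^ 2 * ∫ s, s ^ 2 * g s := by
    rw [integral_sq_mul_const_mul_comp_mul hc]
    simp only [c]
    field_simp
  have hpeak : 1 + 2 * g 0 = 1 + 2 / α * (π / l * φ 0) := by simp only [g, c]; ring_nf
  rw [hΔp2', hmoment, ← hpeak]
  refine ⟨?_, ?_, ?_⟩
  · rw [hpbar α hα]
    simp_rw [hak, mul_assoc, tsum_mul_left, hmean]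
  · nlinarith [mul_le_mul_of_nonneg_left hlo (sq_nonneg (π / l * hbar))]
  · nlinarith [mul_le_mul_of_nonneg_left hhi (sq_nonneg (π / l * hbar))]

/-- (Lemma 3 of the paper, parts 1 and 2a.) For the discretized
coefficients, the mean momentum equals `(π/l)ħ·k̄` for every `α > 0`, and
`-(1/12)((π/l)ħ)²(1+(2/α)φ_l(0)) ≤ Δ*p_α² - (αħΔq)² ≤ (1/6)((π/l)ħ)²(1+(2/α)φ_l(0))`,
where `φ_l(0) = (π/l)φ(0)` and `(αħΔq)² = (αħ)²·∫q²φ(q)dq`. -/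
theorem discretized_packet_momentum_moment_bounds
    (l hbar : ℝ) (hl : 0 < l) (hhbar : 0 < hbar)
    (φ : ℝ → ℝ) (hφ0 : ∀ q : ℝ, 0 ≤ φ q) (hφint : ∫ q : ℝ, φ q = 1)
    (hφmean : ∫ q : ℝ, q * φ q = 0)
    (hφ2 : MeasureTheory.Integrable (fun q : ℝ => q ^ 2 * φ q))
    (hφeven : ∀ q : ℝ, φ (-q) = φ q)
    (hφmax : ∀ q : ℝ, φ q ≤ φ 0)
    (hφmono : ∀ q q' : ℝ, |q| ≤ |q'| → φ q' ≤ φ q)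
    (kbar : ℤ)
    (a : ℝ → ℤ → ℝ)
    (ha : ∀ α : ℝ, 0 < α → ∀ k : ℤ, a α k =
      Real.sqrt (∫ q in ((k : ℝ) - 1/2)..((k : ℝ) + 1/2),
        α⁻¹ * (π / l * φ (π / l * ((q - (kbar : ℝ)) / α)))))
    (pbar : ℝ → ℝ)
    (hpbar : ∀ α : ℝ, 0 < α → pbar α = ∑' k : ℤ, (π / l * hbar * (k : ℝ)) * (a α k) ^ 2)
    (Δp2 : ℝ → ℝ)
    (hΔp2 : ∀ α : ℝ, 0 < α →
      Δp2 α = ∑' k : ℤ, (π / l * hbar * (k : ℝ) - π / l * hbar * (kbar : ℝ)) ^ 2 * (a α k) ^ 2) :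
    ∀ α : ℝ, 0 < α →
      pbar α = π / l * hbar * (kbar : ℝ) ∧
      -(1 / 12) * (π / l * hbar) ^ 2 * (1 + 2 / α * (π / l * φ 0)) ≤
        Δp2 α - (α * hbar) ^ 2 * (∫ q : ℝ, q ^ 2 * φ q) ∧
      Δp2 α - (α * hbar) ^ 2 * (∫ q : ℝ, q ^ 2 * φ q) ≤
        1 / 6 * (π / l * hbar) ^ 2 * (1 + 2 / α * (π / l * φ 0)) :=
  discretized_packet_momentum_moment_bounds_general l hbar hl φ hφ0 hφint hφ2 hφmono kbar a ha pbar
    hpbar Δp2 hΔp2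
end

section
/- Let x* ∈ ℝ and let φ be an even probability density on ℝ, attaining its maximum at 0 and nonincreasing in |q|, with zero mean and finite second moment. For l > 0 define ψ_l(x) = (2l)^{−1/2}·Σ_{k∈ℤ} (∫_{(π/l)(k−1/2)}^{(π/l)(k+1/2)} φ(q) dq)^{1/2}·e^{iπk(x−x*)/l}. Then for every x ∈ ℝ, lim_{l→∞} ψ_l(x) = (2π)^{−1/2}·∫_{−∞}^{+∞} √(φ(q))·e^{iq(x−x*)} dq (pointwise convergence). -/
open Real MeasureTheory Filter Asymptotics Topology

/-! With `h = π / l`, `ψ_l(x)` is `(2π)^{-1/2}` times the integral of the step function equal, on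
the cell of width `h` centred at `h k`, to `√(mass of the cell / h) · e^{i h k (x - x*)}`.
By the Lebesgue differentiation theorem the step functions converge to `√φ(q) e^{i q (x - x*)}`
for almost every `q` as `h → 0`. Since `φ` is nonincreasing in `|q|`, for `h ≤ 1/2` every cell
average near `q` is at most `φ (q / 2)`, or `φ 0` when `|q| ≤ 1`; and `√φ` is integrable because,
by AM-GM, `√φ ≤ ((1 + q²) φ + (1 + q²)⁻¹) / 2` with `φ` and `q² φ` integrable. Dominated convergence
concludes. -/

lemma abs_sub_mul_round_div_le {h : ℝ} (hh : 0 < h) (q : ℝ) :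
    |q - h * round (q / h)| ≤ h / 2 := by
  have : q - h * round (q / h) = h * (q / h - round (q / h)) := by field_simp
  rw [this, abs_mul, abs_of_pos hh]
  nlinarith [abs_sub_round (q / h)]

lemma tendsto_half_nhdsGT_zero : Tendsto (fun h : ℝ => h / 2) (𝓝[>] 0) (𝓝[>] 0) :=
  tendsto_nhdsWithin_of_tendsto_nhds_of_eventually_within _
    (by simpa using ((tendsto_id (x := 𝓝 (0 : ℝ))).div_const 2).mono_left nhdsWithin_le_nhds)
    (eventually_mem_nhdsWithin.mono fun h (hh : 0 < h) => half_pos hh)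

lemma tendsto_mul_round_div (q : ℝ) :
    Tendsto (fun h : ℝ => h * round (q / h)) (𝓝[>] 0) (𝓝 q) := by
  rw [tendsto_iff_norm_sub_tendsto_zero]
  refine squeeze_zero' (Eventually.of_forall fun _ => norm_nonneg _) ?_
    (tendsto_nhds_of_tendsto_nhdsWithin tendsto_half_nhdsGT_zero)
  filter_upwards [self_mem_nhdsWithin] with h hh
  rw [Real.norm_eq_abs, abs_sub_comm]
  exact abs_sub_mul_round_div_le hh q

lemma measurable_round_div (h : ℝ) : Measurable fun q : ℝ => round (q / h) := by
  simp_rw [round_eq]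
  exact Int.measurable_floor.comp ((measurable_id.div_const h).add_const _)

lemma volume_real_preimage_round_div {h : ℝ} (hh : 0 < h) (k : ℤ) :
    volume.real ((fun q : ℝ => round (q / h)) ⁻¹' {k}) = h := by
  have : (fun q : ℝ => round (q / h)) ⁻¹' {k} =
      (fun q => h⁻¹ * q) ⁻¹' Set.Ico ((k : ℝ) - 1/2) (k + 1/2) := by
    ext q
    simp [round_eq_iff, div_eq_inv_mul]
  rw [this, measureReal_def, Real.volume_preimage_mul_left (inv_ne_zero hh.ne'), Real.volume_Ico,
    inv_inv, abs_of_pos hh]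
  norm_num [hh.le]

lemma integral_comp_round_div {E : Type*} [NormedAddCommGroup E] [NormedSpace ℝ E]
    [CompleteSpace E] (G : ℤ → E) {h : ℝ} (hh : 0 < h)
    (hG : Integrable fun q => G (round (q / h))) :
    ∫ q, G (round (q / h)) = h • ∑' k, G k := by
  have hσ := measurable_round_div h
  have hGm : AEStronglyMeasurable G (volume.map fun q : ℝ => round (q / h)) :=
    AEStronglyMeasurable.of_discrete
  rw [← integral_map hσ.aemeasurable hGm,
    integral_countable ((integrable_map_measure hGm hσ.aemeasurable).2 hG)]
  simp_rw [map_measureReal_apply hσ (measurableSet_singleton _), volume_real_preimage_round_div hh]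
  exact tsum_const_smul'' h

noncomputable def cellMass (φ : ℝ → ℝ) (h : ℝ) (k : ℤ) : ℝ :=
  ∫ t in h * ((k : ℝ) - 1/2)..h * ((k : ℝ) + 1/2), φ t

lemma cellMass_div_eq_setAverage (φ : ℝ → ℝ) {h : ℝ} (hh : 0 < h) (k : ℤ) :
    cellMass φ h k / h = ⨍ t in Metric.closedBall (h * k) (h / 2), φ t := by
  rw [setAverage_eq, Real.closedBall_eq_Icc, Real.volume_real_Icc_of_le (by linarith),
    integral_Icc_eq_integral_Ioc, ← intervalIntegral.integral_of_le (by linarith), cellMass,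
    smul_eq_mul, div_eq_inv_mul]
  congr 1 <;> ring_nf

lemma ae_tendsto_cellMass_div {φ : ℝ → ℝ} (hφ : LocallyIntegrable φ) :
    ∀ᵐ q, Tendsto (fun h => cellMass φ h (round (q / h)) / h) (𝓝[>] 0) (𝓝 (φ q)) := by
  filter_upwards [IsUnifLocDoublingMeasure.ae_tendsto_average volume hφ 1] with q hq
  refine (hq (fun h => h * round (q / h)) _ tendsto_half_nhdsGT_zero ?_).congr' ?_
  · filter_upwards [self_mem_nhdsWithin] with h hh
    rw [Metric.mem_closedBall, one_mul, Real.dist_eq]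
    exact abs_sub_mul_round_div_le hh q
  · filter_upwards [self_mem_nhdsWithin] with h hh
    exact (cellMass_div_eq_setAverage φ hh _).symm

lemma cellMass_div_le_of_forall_le {φ : ℝ → ℝ} {h : ℝ} (hh : 0 < h) {k : ℤ} {M : ℝ}
    (hφi : IntervalIntegrable φ volume (h * ((k : ℝ) - 1/2)) (h * ((k : ℝ) + 1/2)))
    (hM : ∀ t, |t - h * k| ≤ h / 2 → φ t ≤ M) :
    cellMass φ h k / h ≤ M := by
  have hle : h * ((k : ℝ) - 1/2) ≤ h * ((k : ℝ) + 1/2) := by nlinarith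
  rw [div_le_iff₀ hh, cellMass]
  calc ∫ t in h * ((k : ℝ) - 1/2)..h * ((k : ℝ) + 1/2), φ t
      ≤ ∫ _ in h * ((k : ℝ) - 1/2)..h * ((k : ℝ) + 1/2), M :=
        intervalIntegral.integral_mono_on hle hφi intervalIntegrable_const fun t ht =>
          hM t (abs_le.2 ⟨by nlinarith [ht.1], by nlinarith [ht.2]⟩)
    _ = M * h := by rw [intervalIntegral.integral_const, smul_eq_mul]; ring

lemma integrable_sqrt_of_integrable_sq_mul {φ : ℝ → ℝ} (hφ0 : ∀ q, 0 ≤ φ q)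
    (hφi : Integrable φ) (hφ2 : Integrable fun q => q ^ 2 * φ q) :
    Integrable fun q => √(φ q) := by
  refine (((hφi.add hφ2).add integrable_inv_one_add_sq).div_const 2).mono'
    (continuous_sqrt.comp_aestronglyMeasurable hφi.1) (ae_of_all _ fun q => ?_)
  set a := (1 + q ^ 2) * φ q
  set b := (1 + q ^ 2)⁻¹
  have ha : 0 ≤ a := mul_nonneg (by positivity) (hφ0 q)
  have hb : 0 ≤ b := by positivity
  have hab : φ q = a * b := by simp only [a, b]; field_simp
  show ‖√(φ q)‖ ≤ (φ q + q ^ 2 * φ q + b) / 2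
  rw [Real.norm_of_nonneg (sqrt_nonneg _), show φ q + q ^ 2 * φ q = a by ring, hab,
    Real.sqrt_le_iff]
  exact ⟨by positivity, by nlinarith [sq_nonneg (a - b)]⟩

lemma sqrt_cellMass_div_le {φ : ℝ → ℝ} (hφi : Integrable φ)
    (hφ : ∀ q q', |q| ≤ |q'| → φ q' ≤ φ q) {h : ℝ} (hh : 0 < h) (hh' : h ≤ 1 / 2) (q : ℝ) :
    √(cellMass φ h (round (q / h)) / h) ≤
      √(φ (q / 2)) + (Set.Icc (-1) 1).indicator (fun _ => √(φ 0)) q := by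
  have hq := abs_sub_mul_round_div_le hh q
  have hnear : ∀ t, |t - h * round (q / h)| ≤ h / 2 → |t - q| ≤ 1 / 2 := fun t ht => by
    calc |t - q| ≤ |t - h * round (q / h)| + |h * round (q / h) - q| := abs_sub_le _ _ _
      _ ≤ 1 / 2 := by rw [abs_sub_comm] at hq; linarith
  by_cases hq1 : |q| ≤ 1
  · rw [Set.indicator_of_mem (show q ∈ Set.Icc (-1) 1 from abs_le.1 hq1)]
    have : cellMass φ h (round (q / h)) / h ≤ φ 0 :=
      cellMass_div_le_of_forall_le hh hφi.intervalIntegrable fun t _ => hφ 0 t (by simp)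
    linarith [sqrt_nonneg (φ (q / 2)), Real.sqrt_le_sqrt this]
  · rw [Set.indicator_of_notMem (show q ∉ Set.Icc (-1) 1 from fun hmem => hq1 (abs_le.2 hmem)),
      add_zero]
    refine Real.sqrt_le_sqrt (cellMass_div_le_of_forall_le hh hφi.intervalIntegrable
      fun t ht => hφ _ _ ?_)
    have htq : |q - t| ≤ 1 / 2 := by rw [abs_sub_comm]; exact hnear t ht
    rw [abs_div, abs_two]
    linarith [abs_sub_abs_le_abs_sub q t, not_le.1 hq1]

lemma mul_sqrt_div_eq {h : ℝ} (hh : 0 < h) (m : ℝ) : h * √(m / h) = √h * √m := by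
  rw [Real.sqrt_div' _ hh.le, mul_div_assoc', mul_comm h, mul_div_assoc, Real.div_sqrt, mul_comm]

theorem tendsto_sqrt_mul_tsum_sqrt_cellMass {φ : ℝ → ℝ} (hφ0 : ∀ q, 0 ≤ φ q)
    (hφi : Integrable φ) (hφ2 : Integrable fun q => q ^ 2 * φ q)
    (hφ : ∀ q q', |q| ≤ |q'| → φ q' ≤ φ q) {e : ℝ → ℂ} (he : Continuous e) {C : ℝ}
    (heC : ∀ q, ‖e q‖ ≤ C) :
    Tendsto (fun h : ℝ => (√h : ℂ) * ∑' k : ℤ, (√(cellMass φ h k) : ℂ) * e (h * k))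
      (𝓝[>] 0) (𝓝 (∫ q, (√(φ q) : ℂ) * e q)) := by
  set G : ℝ → ℤ → ℂ := fun h k => (√(cellMass φ h k / h) : ℂ) * e (h * k)
  set bound : ℝ → ℝ := fun q =>
    C * (√(φ (q / 2)) + (Set.Icc (-1) 1).indicator (fun _ => √(φ 0)) q)
  have hbound : Integrable bound :=
    (((integrable_sqrt_of_integrable_sq_mul hφ0 hφi hφ2).comp_div two_ne_zero).add
      ((integrableOn_const (C := √(φ 0)) measure_Icc_lt_top.ne).integrable_indicator
        measurableSet_Icc)).const_mul C
  have hmeas : ∀ h, AEStronglyMeasurable fun q => G h (round (q / h)) := fun h =>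
    (measurable_of_countable (G h)).comp (measurable_round_div h) |>.aestronglyMeasurable
  have hdom : ∀ᶠ h in 𝓝[>] 0, ∀ q, ‖G h (round (q / h))‖ ≤ bound q := by
    filter_upwards [self_mem_nhdsWithin,
      nhdsWithin_le_nhds (Iic_mem_nhds (by norm_num : (0 : ℝ) < 1 / 2))] with h hh hh' q
    rw [norm_mul, Complex.norm_real, Real.norm_of_nonneg (sqrt_nonneg _), mul_comm]
    exact mul_le_mul (heC _) (sqrt_cellMass_div_le hφi hφ hh hh' q) (sqrt_nonneg _)
      ((norm_nonneg _).trans (heC 0))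
  have hlim : ∀ᵐ q, Tendsto (fun h => G h (round (q / h))) (𝓝[>] 0)
      (𝓝 ((√(φ q) : ℂ) * e q)) := by
    filter_upwards [ae_tendsto_cellMass_div hφi.locallyIntegrable] with q hq
    exact ((Complex.continuous_ofReal.tendsto _).comp ((continuous_sqrt.tendsto _).comp hq)).mul
      ((he.tendsto q).comp (tendsto_mul_round_div q))
  refine (tendsto_integral_filter_of_dominated_convergence bound
    (Eventually.of_forall hmeas) (hdom.mono fun _ hGle => ae_of_all _ hGle) hbound hlim).congr' ?_
  filter_upwards [hdom, self_mem_nhdsWithin] with h hGle hh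
  rw [integral_comp_round_div (G h) hh (hbound.mono' (hmeas h) (ae_of_all _ hGle)),
    Complex.real_smul, ← tsum_mul_left, ← tsum_mul_left]
  refine tsum_congr fun k => ?_
  simp only [G, ← mul_assoc, ← Complex.ofReal_mul, mul_sqrt_div_eq hh]

lemma rpow_neg_half_mul_sqrt_div {l : ℝ} (hl : 0 < l) :
    (2 * π) ^ (-(1/2 : ℝ)) * √(π / l) = (2 * l) ^ (-(1/2 : ℝ)) := by
  rw [rpow_neg (by positivity), rpow_neg (by positivity), ← sqrt_eq_rpow, ← sqrt_eq_rpow,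
    ← sqrt_inv, ← sqrt_mul (by positivity), ← sqrt_inv]
  congr 1
  field_simp

lemma tendsto_pi_div_atTop_nhdsGT_zero : Tendsto (fun l : ℝ => π / l) atTop (𝓝[>] 0) := by
  simpa [Function.comp_def, inv_div] using
    tendsto_inv_atTop_nhdsGT_zero.comp (tendsto_id.atTop_div_const pi_pos)

theorem discretized_packet_large_interval_limit_general
    (xs : ℝ)
    (φ : ℝ → ℝ) (hφ0 : ∀ q : ℝ, 0 ≤ φ q) (hφint : ∫ q : ℝ, φ q = 1)
    (hφ2 : MeasureTheory.Integrable (fun q : ℝ => q ^ 2 * φ q))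
    (hφmono : ∀ q q' : ℝ, |q| ≤ |q'| → φ q' ≤ φ q)
    (ψ : ℝ → ℝ → ℂ)
    (hψ : ∀ l : ℝ, 0 < l → ψ l = fun x : ℝ =>
      (((2 * l) ^ (-(1/2 : ℝ)) : ℝ) : ℂ) *
        ∑' k : ℤ, ((Real.sqrt (∫ q in (π / l * ((k : ℝ) - 1/2))..(π / l * ((k : ℝ) + 1/2)), φ q) : ℝ) : ℂ) *
          Complex.exp (Complex.I * (π : ℂ) * (k : ℂ) * ((x : ℂ) - (xs : ℂ)) / (l : ℂ))) :
    ∀ x : ℝ, Tendsto (fun l : ℝ => ψ l x) atTop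
      (𝓝 ((((2 * π) ^ (-(1/2 : ℝ)) : ℝ) : ℂ) *
        ∫ q : ℝ, ((Real.sqrt (φ q) : ℝ) : ℂ) *
          Complex.exp (Complex.I * (q : ℂ) * ((x : ℂ) - (xs : ℂ))))) := by
  intro x
  have hφi : Integrable φ := .of_integral_ne_zero (by rw [hφint]; exact one_ne_zero)
  have hwave : ∀ q : ℝ, ‖Complex.exp (Complex.I * q * ((x : ℂ) - (xs : ℂ)))‖ ≤ 1 := fun q => by
    simp [Complex.norm_exp]
  have hlim := ((tendsto_sqrt_mul_tsum_sqrt_cellMass hφ0 hφi hφ2 hφmono (by fun_prop) hwave).comp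
    tendsto_pi_div_atTop_nhdsGT_zero).const_mul ((((2 * π) ^ (-(1/2 : ℝ)) : ℝ) : ℂ))
  refine hlim.congr' ?_
  filter_upwards [eventually_gt_atTop 0] with l hl
  rw [hψ l hl, Function.comp_apply, ← mul_assoc, ← Complex.ofReal_mul,
    rpow_neg_half_mul_sqrt_div hl]
  congr 2 with k
  rw [cellMass]
  congr 2
  push_cast
  ring

/-- In the limit of large interval length, the wave packet on `[-l,l]`
obtained by discretizing an even, unimodal momentum density `φ` tends pointwise to the
corresponding wave packet on the line:
`lim_{l→∞} ψ_l(x) = (2π)^{-1/2}·∫ √(φ(q))·e^{iq(x-x*)} dq`. -/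
theorem discretized_packet_large_interval_limit
    (xs : ℝ)
    (φ : ℝ → ℝ) (hφ0 : ∀ q : ℝ, 0 ≤ φ q) (hφint : ∫ q : ℝ, φ q = 1)
    (hφmean : ∫ q : ℝ, q * φ q = 0)
    (hφ2 : MeasureTheory.Integrable (fun q : ℝ => q ^ 2 * φ q))
    (hφeven : ∀ q : ℝ, φ (-q) = φ q)
    (hφmax : ∀ q : ℝ, φ q ≤ φ 0)
    (hφmono : ∀ q q' : ℝ, |q| ≤ |q'| → φ q' ≤ φ q)
    (ψ : ℝ → ℝ → ℂ)
    (hψ : ∀ l : ℝ, 0 < l → ψ l = fun x : ℝ =>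
      (((2 * l) ^ (-(1/2 : ℝ)) : ℝ) : ℂ) *
        ∑' k : ℤ, ((Real.sqrt (∫ q in (π / l * ((k : ℝ) - 1/2))..(π / l * ((k : ℝ) + 1/2)), φ q) : ℝ) : ℂ) *
          Complex.exp (Complex.I * (π : ℂ) * (k : ℂ) * ((x : ℂ) - (xs : ℂ)) / (l : ℂ))) :
    ∀ x : ℝ, Tendsto (fun l : ℝ => ψ l x) atTop
      (𝓝 ((((2 * π) ^ (-(1/2 : ℝ)) : ℝ) : ℂ) *
        ∫ q : ℝ, ((Real.sqrt (φ q) : ℝ) : ℂ) *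
          Complex.exp (Complex.I * (q : ℂ) * ((x : ℂ) - (xs : ℂ))))) :=
  discretized_packet_large_interval_limit_general xs φ hφ0 hφint hφ2 hφmono ψ hψ
end
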